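/- arXiv:1910.06775 — 6 statements merged into one kernel-verified Lean document; each statement's English description precedes it below -/
import Mathlib

section
/- For any bounded linear operator T on a complex Hilbert space, w(T)^2 ≤ (1/4)‖ |T|² + |T*|² ‖ + (1/2) w(T²), where w denotes the numerical radius, |T| = (T*T)^{1/2}, and ‖·‖ the operator norm. -/
/-!
Apply Buzano's inequality `|⟪a, e⟫ ⟪e, b⟫| ≤ (‖a‖ ‖b‖ + |⟪a, b⟫|) / 2` to `a = T x`, `b = T* x`,
`e = x` for a unit vector `x`: since `⟪x, T* x⟫ = ⟪T x, x⟫` and `⟪T x, T* x⟫ = ⟪T² x, x⟫`, this gives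
`|⟪T x, x⟫|² ≤ (‖T x‖ ‖T* x‖ + w(T²)) / 2`. By AM-GM, `‖T x‖ ‖T* x‖` is at most half of
`‖T x‖² + ‖T* x‖² = ⟪(T*T + TT*) x, x⟫ ≤ ‖|T|² + |T*|²‖`. Take the supremum over `x`.
-/

/-- The numerical radius of an operator on a complex Hilbert space. -/
noncomputable def nr {H : Type*} [NormedAddCommGroup H] [InnerProductSpace ℂ H]
    (T : H →L[ℂ] H) : ℝ :=
  sSup {r : ℝ | ∃ x : H, ‖x‖ = 1 ∧ r = ‖(inner ℂ (T x) x : ℂ)‖}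

/-- `|T| = (T*T)^{1/2}` via the continuous functional calculus. -/
noncomputable def absOp {H : Type*} [NormedAddCommGroup H] [InnerProductSpace ℂ H]
    [CompleteSpace H] (X : H →L[ℂ] H) : H →L[ℂ] H :=
  cfc Real.sqrt (star X * X)

open RCLike ContinuousLinearMap

section InnerProductSpace

variable {𝕜 E : Type*} [RCLike 𝕜] [NormedAddCommGroup E] [InnerProductSpace 𝕜 E]

local notation "⟪" x ", " y "⟫" => inner 𝕜 x y

/-- Buzano's inequality. -/
theorem norm_inner_mul_inner_le_of_norm_eq_one (a b : E) {e : E} (he : ‖e‖ = 1) :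
    ‖⟪a, e⟫ * ⟪e, b⟫‖ ≤ (‖a‖ * ‖b‖ + ‖⟪a, b⟫‖) / 2 := by
  -- `a'` is the reflection of `a` in the line through `e`.
  set a' : E := (2 * ⟪e, a⟫) • e - a
  have hre : re ⟪(2 * ⟪e, a⟫) • e, a⟫ = 2 * ‖⟪e, a⟫‖ ^ 2 := by
    rw [inner_smul_left, map_mul (starRingEnd 𝕜), mul_assoc, RCLike.conj_mul]
    simp [← ofReal_pow, -map_pow]
  have norm_a' : ‖a'‖ = ‖a‖ := by
    refine (sq_eq_sq₀ (norm_nonneg _) (norm_nonneg _)).1 ?_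
    rw [@norm_sub_sq 𝕜, hre, norm_smul, norm_mul, RCLike.norm_ofNat, he]
    ring
  have hsum : ⟪a, e⟫ * ⟪e, b⟫ = (⟪a', b⟫ + ⟪a, b⟫) / 2 := by
    rw [inner_sub_left, inner_smul_left, map_mul, inner_conj_symm, map_ofNat]
    ring
  calc ‖⟪a, e⟫ * ⟪e, b⟫‖ ≤ (‖⟪a', b⟫‖ + ‖⟪a, b⟫‖) / 2 := by
        rw [hsum, norm_div, RCLike.norm_ofNat]
        gcongr
        exact norm_add_le _ _
    _ ≤ (‖a‖ * ‖b‖ + ‖⟪a, b⟫‖) / 2 := by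
        gcongr
        exact norm_a' ▸ norm_inner_le_norm a' b

theorem ContinuousLinearMap.norm_inner_apply_self_le (T : E →L[𝕜] E) (x : E) :
    ‖⟪T x, x⟫‖ ≤ ‖T‖ * ‖x‖ ^ 2 :=
  calc ‖⟪T x, x⟫‖ ≤ ‖T x‖ * ‖x‖ := norm_inner_le_norm _ _
    _ ≤ ‖T‖ * ‖x‖ * ‖x‖ := by gcongr; exact T.le_opNorm x
    _ = ‖T‖ * ‖x‖ ^ 2 := by ring

variable [CompleteSpace E]

theorem ContinuousLinearMap.norm_apply_sq_add_norm_star_apply_sq_le (T : E →L[𝕜] E) (x : E) :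
    ‖T x‖ ^ 2 + ‖star T x‖ ^ 2 ≤ ‖star T * T + T * star T‖ * ‖x‖ ^ 2 := by
  set A := star T * T + T * star T
  have hA : ‖T x‖ ^ 2 + ‖star T x‖ ^ 2 = re ⟪A x, x⟫ := by
    rw [apply_norm_sq_eq_inner_adjoint_left, apply_norm_sq_eq_inner_adjoint_left,
      star_eq_adjoint, adjoint_adjoint, ← map_add, ← inner_add_left]
    rfl
  calc ‖T x‖ ^ 2 + ‖star T x‖ ^ 2 = re ⟪A x, x⟫ := hA
    _ ≤ ‖⟪A x, x⟫‖ := re_le_norm _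
    _ ≤ ‖A‖ * ‖x‖ ^ 2 := A.norm_inner_apply_self_le x

theorem ContinuousLinearMap.norm_inner_apply_self_sq_le (T : E →L[𝕜] E) {x : E} (hx : ‖x‖ = 1) :
    ‖⟪T x, x⟫‖ ^ 2 ≤ (‖T x‖ * ‖star T x‖ + ‖⟪(T * T) x, x⟫‖) / 2 := by
  have h := norm_inner_mul_inner_le_of_norm_eq_one (𝕜 := 𝕜) (T x) (star T x) hx
  rwa [star_eq_adjoint, adjoint_inner_right, adjoint_inner_right, norm_mul, ← sq] at h

end InnerProductSpace

section NumericalRadius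

variable {H : Type*} [NormedAddCommGroup H] [InnerProductSpace ℂ H]

theorem nr_nonneg (T : H →L[ℂ] H) : 0 ≤ nr T :=
  Real.sSup_nonneg (by rintro r ⟨x, -, rfl⟩; positivity)

theorem norm_inner_apply_self_le_nr (T : H →L[ℂ] H) {x : H} (hx : ‖x‖ = 1) :
    ‖inner ℂ (T x) x‖ ≤ nr T := by
  refine le_csSup ⟨‖T‖, ?_⟩ ⟨x, hx, rfl⟩
  rintro r ⟨y, hy, rfl⟩
  simpa [hy] using T.norm_inner_apply_self_le y

theorem nr_le_of_forall {T : H →L[ℂ] H} {c : ℝ} (hc : 0 ≤ c)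
    (h : ∀ x : H, ‖x‖ = 1 → ‖inner ℂ (T x) x‖ ≤ c) : nr T ≤ c :=
  Real.sSup_le (by rintro r ⟨x, hx, rfl⟩; exact h x hx) hc

variable [CompleteSpace H]

theorem absOp_sq (X : H →L[ℂ] H) : absOp X ^ 2 = star X * X := by
  rw [absOp, ← cfcₙ_eq_cfc, ← CFC.sqrt_eq_real_sqrt _ (star_mul_self_nonneg X), CFC.sq_sqrt _]

end NumericalRadius

/-- `w(T)² ≤ (1/4)‖|T|² + |T*|²‖ + (1/2)w(T²)`. -/
theorem nr_sq_le {H : Type*} [NormedAddCommGroup H] [InnerProductSpace ℂ H]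
    [CompleteSpace H] (T : H →L[ℂ] H) :
    nr T ^ 2 ≤ (1/4) * ‖absOp T ^ 2 + absOp (star T) ^ 2‖ + (1/2) * nr (T * T) := by
  rw [absOp_sq, absOp_sq, star_star]
  set R := (1/4) * ‖star T * T + T * star T‖ + (1/2) * nr (T * T) with hR
  have hR_nonneg : 0 ≤ R := by have := nr_nonneg (T * T); positivity
  refine (Real.le_sqrt (nr_nonneg T) hR_nonneg).1 (nr_le_of_forall (Real.sqrt_nonneg R) fun x hx => ?_)
  refine Real.le_sqrt_of_sq_le ?_
  have buzano := T.norm_inner_apply_self_sq_le hx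
  have sum_sq := T.norm_apply_sq_add_norm_star_apply_sq_le x
  have nr_sq := norm_inner_apply_self_le_nr (T * T) hx
  have am_gm := two_mul_le_add_sq ‖T x‖ ‖star T x‖
  rw [hx, one_pow, mul_one] at sum_sq
  rw [hR]
  linarith
end

section
/- (Buzano's inequality) For all vectors a, b, x in a complex Hilbert space, |⟨a,x⟩⟨x,b⟩| ≤ ((‖a‖‖b‖ + |⟨a,b⟩|)/2) · ‖x‖². -/
/-!
Put `v = 2⟨x,b⟩ x - ‖x‖² b`. For `x ≠ 0` this is `‖x‖²` times the reflection of `b` in the line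
spanned by `x`, so `‖v‖ = ‖x‖² ‖b‖`. Since `⟨a,v⟩ = 2⟨a,x⟩⟨x,b⟩ - ‖x‖²⟨a,b⟩`, Cauchy–Schwarz for
`⟨a,v⟩` and the triangle inequality give `2 |⟨a,x⟩⟨x,b⟩| ≤ ‖a‖ ‖x‖² ‖b‖ + ‖x‖² |⟨a,b⟩|`.
-/

open RCLike ComplexConjugate
open scoped InnerProductSpace

section

variable {𝕜 E : Type*} [RCLike 𝕜] [NormedAddCommGroup E] [InnerProductSpace 𝕜 E]

theorem norm_two_inner_smul_sub_norm_sq_smul (x b : E) :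
    ‖(2 * ⟪x, b⟫_𝕜) • x - ((‖x‖ ^ 2 : ℝ) : 𝕜) • b‖ = ‖x‖ ^ 2 * ‖b‖ := by
  set c := ⟪x, b⟫_𝕜
  have hcross : re ⟪(2 * c) • x, ((‖x‖ ^ 2 : ℝ) : 𝕜) • b⟫_𝕜 = 2 * ‖x‖ ^ 2 * ‖c‖ ^ 2 := by
    calc re ⟪(2 * c) • x, ((‖x‖ ^ 2 : ℝ) : 𝕜) • b⟫_𝕜
        = re (((2 * ‖x‖ ^ 2 : ℝ) : 𝕜) * (conj c * c)) := by
          congr 1; rw [inner_smul_left, inner_smul_right, map_mul, map_ofNat]; push_cast; ring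
      _ = 2 * ‖x‖ ^ 2 * ‖c‖ ^ 2 := by
          rw [RCLike.conj_mul, ← ofReal_pow, ← ofReal_mul, ofReal_re]
  have hsq : ‖(2 * c) • x - ((‖x‖ ^ 2 : ℝ) : 𝕜) • b‖ ^ 2 = (‖x‖ ^ 2 * ‖b‖) ^ 2 := by
    rw [@norm_sub_sq 𝕜, hcross, norm_smul, norm_smul, norm_mul, norm_ofReal, RCLike.norm_ofNat,
      abs_of_nonneg (by positivity)]
    ring
  exact (sq_eq_sq₀ (norm_nonneg _) (by positivity)).1 hsq

theorem norm_inner_mul_inner_le (a b x : E) :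
    ‖⟪a, x⟫_𝕜 * ⟪x, b⟫_𝕜‖ ≤ (‖a‖ * ‖b‖ + ‖⟪a, b⟫_𝕜‖) / 2 * ‖x‖ ^ 2 := by
  set v := (2 * ⟪x, b⟫_𝕜) • x - ((‖x‖ ^ 2 : ℝ) : 𝕜) • b
  have hav : ⟪a, v⟫_𝕜 = 2 * (⟪a, x⟫_𝕜 * ⟪x, b⟫_𝕜) - ((‖x‖ ^ 2 : ℝ) : 𝕜) * ⟪a, b⟫_𝕜 := by
    rw [inner_sub_right, inner_smul_right, inner_smul_right]; ring
  have hcs : ‖⟪a, v⟫_𝕜‖ ≤ ‖a‖ * (‖x‖ ^ 2 * ‖b‖) :=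
    norm_two_inner_smul_sub_norm_sq_smul (𝕜 := 𝕜) x b ▸ norm_inner_le_norm a v
  have htri : 2 * ‖⟪a, x⟫_𝕜 * ⟪x, b⟫_𝕜‖ ≤ ‖⟪a, v⟫_𝕜‖ + ‖x‖ ^ 2 * ‖⟪a, b⟫_𝕜‖ := by
    calc 2 * ‖⟪a, x⟫_𝕜 * ⟪x, b⟫_𝕜‖
        = ‖⟪a, v⟫_𝕜 + ((‖x‖ ^ 2 : ℝ) : 𝕜) * ⟪a, b⟫_𝕜‖ := by
          rw [hav, sub_add_cancel, norm_mul (2 : 𝕜), RCLike.norm_ofNat]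
      _ ≤ ‖⟪a, v⟫_𝕜‖ + ‖x‖ ^ 2 * ‖⟪a, b⟫_𝕜‖ := by
          grw [norm_add_le, norm_mul, norm_ofReal, abs_of_nonneg (by positivity)]
  linarith

end

/-- Buzano's inequality: `|⟨a,x⟩⟨x,b⟩| ≤ ((‖a‖‖b‖ + |⟨a,b⟩|)/2)‖x‖²`. -/
theorem buzano_inequality {H : Type*} [NormedAddCommGroup H] [InnerProductSpace ℂ H]
    (a b x : H) :
    ‖(inner ℂ a x : ℂ) * (inner ℂ x b : ℂ)‖ ≤
      (‖a‖ * ‖b‖ + ‖(inner ℂ a b : ℂ)‖) / 2 * ‖x‖ ^ 2 :=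
  norm_inner_mul_inner_le a b x
end

section
/- Let T = (T_{ij}) be an n×n operator matrix with T_{ij} ∈ B(H), and f, g nonnegative continuous functions on [0,∞) with f(t)g(t) = t. Define the n×n matrix T'' with diagonal entries t''_{ii} = (1/2)‖f²(|T_{ii}|) + g²(|T_{ii}*|)‖ and off-diagonal entries t''_{ij} = ‖f²(|T_{ij}|)‖^{1/2} ‖g²(|T_{ij}*|)‖^{1/2}. Then w(T) ≤ w(T''). -/
open ContinuousLinearMap
open scoped InnerProductSpace

section CStarAlgebra
variable {A : Type*} [CStarAlgebra A]

lemma cfc_sq_eq_star_mul_self {a : A} (ha : IsSelfAdjoint a) {h : ℝ → ℝ} (hh : Continuous h) :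
    cfc (fun t => h t ^ 2) a = star (cfc h a) * cfc h a := by
  rw [cfc_pow h 2 a, (cfc_predicate h a).star_eq, sq]

lemma norm_cfc_eq_sqrt_norm_cfc_sq {a : A} (ha : IsSelfAdjoint a) {h : ℝ → ℝ}
    (hh : Continuous h) : ‖cfc h a‖ = √‖cfc (fun t => h t ^ 2) a‖ := by
  rw [cfc_sq_eq_star_mul_self ha hh, CStarRing.norm_star_mul_self,
    Real.sqrt_mul_self (norm_nonneg _)]

theorem SemiconjBy.cfc_of_isSelfAdjoint {a b x : A}
    (ha : IsSelfAdjoint a) (hb : IsSelfAdjoint b) (h : SemiconjBy x a b) (φ : ℝ → ℝ)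
    (hφ : ContinuousOn φ (spectrum ℝ a ∪ spectrum ℝ b) := by cfc_cont_tac) :
    SemiconjBy x (cfc φ a) (cfc φ b) := by
  have : CompactSpace ↑(spectrum ℝ a ∪ spectrum ℝ b) := isCompact_iff_compactSpace.mp
    ((ContinuousFunctionalCalculus.isCompact_spectrum a).union
      (ContinuousFunctionalCalculus.isCompact_spectrum b))
  suffices key : ∀ F, SemiconjBy x (cfcHomSuperset ha Set.subset_union_left F)
      (cfcHomSuperset hb Set.subset_union_right F) by
    convert key ⟨_, hφ.domRestrict⟩ using 1
    · rw [cfc_apply φ a ha (hφ.mono Set.subset_union_left), cfcHomSuperset_apply]; rfl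
    · rw [cfc_apply φ b hb (hφ.mono Set.subset_union_right), cfcHomSuperset_apply]; rfl
  intro F
  induction F using ContinuousMap.induction_on_of_compact with
  | const r =>
    change SemiconjBy x (cfcHomSuperset ha _ (algebraMap ℝ _ r))
      (cfcHomSuperset hb _ (algebraMap ℝ _ r))
    rw [AlgHomClass.commutes, AlgHomClass.commutes]
    exact (Algebra.commutes r x).symm
  | id => rwa [cfcHomSuperset_id, cfcHomSuperset_id]
  | star_id => rwa [star_trivial, cfcHomSuperset_id, cfcHomSuperset_id]
  | add F G hF hG => simpa only [map_add] using hF.add_right hG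
  | mul F G hF hG => simpa only [map_mul] using hF.mul_right hG
  | frequently F hF =>
    refine isClosed_eq ?_ ?_ |>.closure_subset (mem_closure_iff_frequently.mpr hF)
    · exact continuous_const.mul (cfcHomSuperset_continuous ha _)
    · exact (cfcHomSuperset_continuous hb _).mul continuous_const

end CStarAlgebra

lemma sqrt_add_inv_mul_mul_le_one {δ : ℝ} (hδ : 0 < δ) (t : ℝ) :
    (√t + δ)⁻¹ * t * (√t + δ)⁻¹ ≤ 1 := by
  rw [mul_comm, ← mul_assoc, ← sq, inv_pow, inv_mul_le_one₀ (by positivity)]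
  rcases le_total t 0 with ht | ht
  · nlinarith [sq_nonneg (√t + δ)]
  · nlinarith [Real.sq_sqrt ht, Real.sqrt_nonneg t]

section Operator
variable {H : Type*} [NormedAddCommGroup H] [InnerProductSpace ℂ H] [CompleteSpace H]

lemma norm_apply_sq_eq_re_inner (V : H →L[ℂ] H) (x : H) :
    ‖V x‖ ^ 2 = RCLike.re ⟪(star V * V) x, x⟫_ℂ :=
  apply_norm_sq_eq_inner_adjoint_left V x

lemma norm_apply_le_of_star_mul_self_le {S T : H →L[ℂ] H} (h : star T * T ≤ star S * S)
    (x : H) : ‖T x‖ ≤ ‖S x‖ := by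
  have hpos := ((le_def _ _).mp h).re_inner_nonneg_left x
  rw [sub_apply, inner_sub_left, map_sub, sub_nonneg, ← norm_apply_sq_eq_re_inner,
    ← norm_apply_sq_eq_re_inner] at hpos
  exact pow_le_pow_iff_left₀ (norm_nonneg _) (norm_nonneg _) two_ne_zero |>.mp hpos

lemma isSelfAdjoint_absOp (X : H →L[ℂ] H) : IsSelfAdjoint (absOp X) := cfc_predicate _ _

lemma norm_inner_le_add_of_mul_eq_sqrt (X : H →L[ℂ] H) {φ ψ : ℝ → ℝ} (hφ : Continuous φ)
    (hψ : Continuous ψ) (hφψ : ∀ t, ψ t * φ t = √t) {δ : ℝ} (hδ : 0 < δ) (x y : H) :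
    ‖⟪X x, y⟫_ℂ‖ ≤
      ‖cfc φ (star X * X) x‖ * ‖cfc ψ (X * star X) y‖ + δ * (‖x‖ * ‖y‖) := by
  set a := star X * X
  set b := X * star X
  have ha : IsSelfAdjoint a := .star_mul_self X
  have hb : IsSelfAdjoint b := .mul_star_self X
  -- `r = (√· + δ)⁻¹`, kept opaque so that `fun_prop` can use `hr`
  obtain ⟨r, hr, hr_inv, hr_le⟩ : ∃ r : ℝ → ℝ,
      Continuous r ∧ (∀ t, r t * (√t + δ) = 1) ∧ ∀ t, r t * t * r t ≤ 1 :=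
    ⟨fun t => (√t + δ)⁻¹,
      (Real.continuous_sqrt.add continuous_const).inv₀ fun t =>
        (add_pos_of_nonneg_of_pos (Real.sqrt_nonneg t) hδ).ne',
      fun t => inv_mul_cancel₀ (by positivity), sqrt_add_inv_mul_mul_le_one hδ⟩
  set U := X * cfc r a
  set K := cfc (fun t => r t * ψ t) b
  have hK : X * cfc (fun t => r t * ψ t) a = K * X :=
    SemiconjBy.cfc_of_isSelfAdjoint ha hb (mul_assoc X (star X) X).symm _
  have hX : X = K * X * cfc φ a + δ • U := by
    have hone : cfc (fun t => r t * ψ t * φ t + δ * r t) a = 1 := by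
      rw [← cfc_one ℝ a]
      refine cfc_congr fun t _ => ?_
      rw [Pi.one_apply, ← hr_inv t, ← hφψ t]
      ring
    calc X = X * cfc (fun t => r t * ψ t * φ t + δ * r t) a := by rw [hone, mul_one]
      _ = K * X * cfc φ a + δ • U := by
        rw [cfc_add .., cfc_mul .., cfc_const_mul .., mul_add, ← mul_assoc, hK, mul_smul_comm]
  have hU : ‖U x‖ ≤ ‖x‖ := by
    refine norm_apply_le_of_star_mul_self_le (S := 1) ?_ x
    calc star U * U = cfc (fun t => r t * t * r t) a := by
          rw [cfc_mul .., cfc_mul .., cfc_id' ℝ a, star_mul, (cfc_predicate r a).star_eq]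
          simp only [U, a, mul_assoc]
      _ ≤ star 1 * 1 := by
          rw [star_one, one_mul]
          exact cfc_le_one _ _ fun t _ => hr_le t
  have hK' : ‖star X (K y)‖ ≤ ‖cfc ψ b y‖ := by
    refine norm_apply_le_of_star_mul_self_le (T := star X * K) ?_ y
    calc star (star X * K) * (star X * K) = cfc (fun t => r t * ψ t * t * (r t * ψ t)) b := by
          rw [cfc_mul .., cfc_mul .., cfc_id' ℝ b, star_mul,
            (cfc_predicate (fun t => r t * ψ t) b).star_eq, star_star]
          simp only [K, b, mul_assoc]
      _ ≤ star (cfc ψ b) * cfc ψ b := by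
          rw [← cfc_sq_eq_star_mul_self hb hψ]
          refine cfc_mono (fun t _ => ?_) (by fun_prop) (by fun_prop)
          calc r t * ψ t * t * (r t * ψ t) = ψ t ^ 2 * (r t * t * r t) := by ring
            _ ≤ ψ t ^ 2 * 1 := by gcongr; exact hr_le t
            _ = ψ t ^ 2 := mul_one _
  calc ‖⟪X x, y⟫_ℂ‖ = ‖⟪cfc φ a x, star X (K y)⟫_ℂ + δ • ⟪U x, y⟫_ℂ‖ := by
        have hKX : ⟪(K * X * cfc φ a) x, y⟫_ℂ = ⟪cfc φ a x, star X (K y)⟫_ℂ := by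
          change ⟪K (X (cfc φ a x)), y⟫_ℂ = _
          rw [← adjoint_inner_right, (cfc_predicate (fun t => r t * ψ t) b).adjoint_eq,
            star_eq_adjoint, adjoint_inner_right]
        conv_lhs => rw [hX]
        rw [add_apply, inner_add_left, hKX, smul_apply, RCLike.real_smul_eq_coe_smul (K := ℂ),
          inner_smul_real_left]
    _ ≤ ‖cfc φ a x‖ * ‖cfc ψ b y‖ + δ * (‖x‖ * ‖y‖) := by
        refine (norm_add_le _ _).trans (add_le_add ?_ ?_)
        · exact (norm_inner_le_norm _ _).trans (by gcongr)
        · rw [norm_smul, Real.norm_of_nonneg hδ.le]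
          exact mul_le_mul_of_nonneg_left ((norm_inner_le_norm _ _).trans (by gcongr)) hδ.le

lemma norm_inner_le_of_mul_eq_sqrt (X : H →L[ℂ] H) {φ ψ : ℝ → ℝ} (hφ : Continuous φ)
    (hψ : Continuous ψ) (hφψ : ∀ t, ψ t * φ t = √t) (x y : H) :
    ‖⟪X x, y⟫_ℂ‖ ≤ ‖cfc φ (star X * X) x‖ * ‖cfc ψ (X * star X) y‖ := by
  refine le_of_forall_pos_le_add fun ε hε => ?_
  have hxy : 0 < ‖x‖ * ‖y‖ + 1 := by positivity
  refine (norm_inner_le_add_of_mul_eq_sqrt X hφ hψ hφψ (div_pos hε hxy) x y).trans ?_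
  gcongr
  rw [div_mul_eq_mul_div, div_le_iff₀ hxy]
  nlinarith

lemma norm_inner_le_norm_cfc_absOp_mul {f g : ℝ → ℝ} (hf : Continuous f) (hg : Continuous g)
    (hfg : ∀ t, 0 ≤ t → f t * g t = t) (X : H →L[ℂ] H) (x y : H) :
    ‖⟪X x, y⟫_ℂ‖ ≤ ‖cfc f (absOp X) x‖ * ‖cfc g (absOp (star X)) y‖ := by
  have habs : absOp (star X) = cfc Real.sqrt (X * star X) := by rw [absOp, star_star]
  rw [habs, absOp, ← cfc_comp' f Real.sqrt _ (by fun_prop) (by fun_prop) (.star_mul_self X),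
    ← cfc_comp' g Real.sqrt _ (by fun_prop) (by fun_prop) (.mul_star_self X)]
  exact norm_inner_le_of_mul_eq_sqrt X (by fun_prop) (by fun_prop)
    (fun t => by rw [mul_comm]; exact hfg _ (Real.sqrt_nonneg t)) x y

lemma norm_inner_le_sqrt_norm_cfc_sq_mul {f g : ℝ → ℝ} (hf : Continuous f) (hg : Continuous g)
    (hfg : ∀ t, 0 ≤ t → f t * g t = t) (X : H →L[ℂ] H) (u v : H) :
    ‖⟪X u, v⟫_ℂ‖ ≤ √‖cfc (fun t => f t ^ 2) (absOp X)‖ *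
      √‖cfc (fun t => g t ^ 2) (absOp (star X))‖ * (‖u‖ * ‖v‖) := by
  rw [← norm_cfc_eq_sqrt_norm_cfc_sq (isSelfAdjoint_absOp X) hf,
    ← norm_cfc_eq_sqrt_norm_cfc_sq (isSelfAdjoint_absOp _) hg, mul_mul_mul_comm]
  exact (norm_inner_le_norm_cfc_absOp_mul hf hg hfg X u v).trans
    (mul_le_mul (le_opNorm _ _) (le_opNorm _ _) (norm_nonneg _) (by positivity))

lemma norm_inner_self_le_half_norm_cfc_sq_add {f g : ℝ → ℝ} (hf : Continuous f)
    (hg : Continuous g) (hfg : ∀ t, 0 ≤ t → f t * g t = t) (X : H →L[ℂ] H) (u : H) :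
    ‖⟪X u, u⟫_ℂ‖ ≤ 1 / 2 * ‖cfc (fun t => f t ^ 2) (absOp X) +
      cfc (fun t => g t ^ 2) (absOp (star X))‖ * (‖u‖ * ‖u‖) := by
  set F := cfc f (absOp X)
  set G := cfc g (absOp (star X))
  have hsum : ‖F u‖ ^ 2 + ‖G u‖ ^ 2 ≤ ‖cfc (fun t => f t ^ 2) (absOp X) +
      cfc (fun t => g t ^ 2) (absOp (star X))‖ * (‖u‖ * ‖u‖) := by
    rw [cfc_sq_eq_star_mul_self (isSelfAdjoint_absOp X) hf,
      cfc_sq_eq_star_mul_self (isSelfAdjoint_absOp _) hg, norm_apply_sq_eq_re_inner,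
      norm_apply_sq_eq_re_inner, ← map_add, ← inner_add_left, ← add_apply, ← mul_assoc]
    exact (re_inner_le_norm _ _).trans (by gcongr; exact le_opNorm _ _)
  calc ‖⟪X u, u⟫_ℂ‖ ≤ ‖F u‖ * ‖G u‖ := norm_inner_le_norm_cfc_absOp_mul hf hg hfg X u u
    _ ≤ 1 / 2 * (‖F u‖ ^ 2 + ‖G u‖ ^ 2) := by nlinarith [sq_nonneg (‖F u‖ - ‖G u‖)]
    _ ≤ _ := by rw [mul_assoc]; gcongr

end Operator

section NumericalRadius
variable {E : Type*} [NormedAddCommGroup E] [InnerProductSpace ℂ E]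

lemma nr_nonneg_s9 (S : E →L[ℂ] E) : 0 ≤ nr S :=
  Real.sSup_nonneg <| by rintro _ ⟨x, -, rfl⟩; exact norm_nonneg _

lemma norm_inner_le_nr (S : E →L[ℂ] E) {x : E} (hx : ‖x‖ = 1) : ‖⟪S x, x⟫_ℂ‖ ≤ nr S := by
  refine le_csSup ⟨‖S‖, ?_⟩ ⟨x, hx, rfl⟩
  rintro _ ⟨z, hz, rfl⟩
  have := (norm_inner_le_norm (𝕜 := ℂ) (S z) z).trans
    (mul_le_mul_of_nonneg_right (S.le_opNorm z) (norm_nonneg z))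
  rwa [hz, mul_one, mul_one] at this

lemma nr_le_of_forall_norm_inner_le (S : E →L[ℂ] E) {c : ℝ} (hc : 0 ≤ c)
    (h : ∀ x, ‖x‖ = 1 → ‖⟪S x, x⟫_ℂ‖ ≤ c) : nr S ≤ c :=
  Real.sSup_le (by rintro _ ⟨x, hx, rfl⟩; exact h x hx) hc

theorem nr_le_nr_of_norm_inner_entry_le {ι : Type*} [Fintype ι] [DecidableEq ι]
    (M : ι → ι → (E →L[ℂ] E))
    (T : (PiLp 2 fun _ : ι => E) →L[ℂ] (PiLp 2 fun _ : ι => E))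
    (hT : ∀ x, ∀ i, T x i = ∑ j, M i j (x j)) (c : ι → ι → ℝ)
    (hM : ∀ (x : PiLp 2 fun _ : ι => E) i j,
      ‖⟪M i j (x j), x i⟫_ℂ‖ ≤ c i j * (‖x j‖ * ‖x i‖)) :
    nr T ≤ nr (Matrix.toEuclideanCLM (𝕜 := ℂ) (Matrix.of fun i j => (c i j : ℂ))) := by
  refine nr_le_of_forall_norm_inner_le T (nr_nonneg_s9 _) fun x hx => ?_
  set y : EuclideanSpace ℂ ι := WithLp.toLp 2 fun i => (‖x i‖ : ℂ)
  have hy : ‖y‖ = 1 := by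
    rw [← hx, EuclideanSpace.norm_eq, PiLp.norm_eq_of_L2]
    simp [y]
  have hinner : ⟪Matrix.toEuclideanCLM (𝕜 := ℂ) (Matrix.of fun i j => (c i j : ℂ)) y, y⟫_ℂ =
      ((∑ i, ∑ j, c i j * (‖x j‖ * ‖x i‖) : ℝ) : ℂ) := by
    simp only [PiLp.inner_apply, Matrix.toEuclideanCLM_toLp, y, Matrix.mulVec, dotProduct,
      Matrix.of_apply, RCLike.inner_apply, map_sum, map_mul, Complex.conj_ofReal, Finset.mul_sum]
    push_cast
    exact Finset.sum_congr rfl fun i _ => Finset.sum_congr rfl fun j _ => by ring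
  calc ‖⟪T x, x⟫_ℂ‖ = ‖∑ i, ∑ j, ⟪M i j (x j), x i⟫_ℂ‖ := by
        simp only [PiLp.inner_apply, hT, sum_inner]
    _ ≤ ∑ i, ∑ j, c i j * (‖x j‖ * ‖x i‖) :=
        norm_sum_le_of_le _ fun i _ => norm_sum_le_of_le _ fun j _ => hM x i j
    _ ≤ ‖⟪Matrix.toEuclideanCLM (𝕜 := ℂ) (Matrix.of fun i j => (c i j : ℂ)) y, y⟫_ℂ‖ := by
        rw [hinner, Complex.norm_real, Real.norm_eq_abs]
        exact le_abs_self _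
    _ ≤ _ := norm_inner_le_nr _ hy

end NumericalRadius

theorem nr_opMatrix_le'_general (n : ℕ) {H : Type*} [NormedAddCommGroup H]
    [InnerProductSpace ℂ H] [CompleteSpace H]
    (M : Fin n → Fin n → (H →L[ℂ] H))
    (T : (PiLp 2 fun _ : Fin n => H) →L[ℂ] (PiLp 2 fun _ : Fin n => H))
    (hT : ∀ x, ∀ i, T x i = ∑ j, M i j (x j))
    (f g : ℝ → ℝ) (hf : Continuous f) (hg : Continuous g)
    (hfg : ∀ t, 0 ≤ t → f t * g t = t) :
    nr T ≤ nr (Matrix.toEuclideanCLM (𝕜 := ℂ) (Matrix.of fun i j =>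
      if i = j then
        (((1/2) * ‖cfc (fun t => f t ^ 2) (absOp (M i j)) +
            cfc (fun t => g t ^ 2) (absOp (star (M i j)))‖ : ℝ) : ℂ)
      else
        ((Real.sqrt ‖cfc (fun t => f t ^ 2) (absOp (M i j))‖ *
          Real.sqrt ‖cfc (fun t => g t ^ 2) (absOp (star (M i j)))‖ : ℝ) : ℂ))) := by
  simp only [← apply_ite Complex.ofReal]
  refine nr_le_nr_of_norm_inner_entry_le M T hT _ fun x i j => ?_
  rcases eq_or_ne i j with rfl | hij
  · rw [if_pos rfl, mul_comm ‖x i‖]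
    exact norm_inner_self_le_half_norm_cfc_sq_add hf hg hfg _ _
  · rw [if_neg hij]
    exact norm_inner_le_sqrt_norm_cfc_sq_mul hf hg hfg _ _ _

/-- If `T` is the `n × n` operator matrix with entries `M i j` acting on `⊕ⁿ H`, and
`f, g ≥ 0` continuous with `f(t)g(t) = t` on `[0,∞)`, then `w(T) ≤ w(T'')` with
`t''_{ii} = (1/2)‖f²(|M i i|) + g²(|M i i*|)‖` and
`t''_{ij} = ‖f²(|M i j|)‖^{1/2} ‖g²(|M i j*|)‖^{1/2}` for `i ≠ j`. -/
theorem nr_opMatrix_le' (n : ℕ) {H : Type*} [NormedAddCommGroup H]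
    [InnerProductSpace ℂ H] [CompleteSpace H]
    (M : Fin n → Fin n → (H →L[ℂ] H))
    (T : (PiLp 2 fun _ : Fin n => H) →L[ℂ] (PiLp 2 fun _ : Fin n => H))
    (hT : ∀ x, ∀ i, T x i = ∑ j, M i j (x j))
    (f g : ℝ → ℝ) (hf : Continuous f) (hg : Continuous g)
    (hf0 : ∀ t, 0 ≤ t → 0 ≤ f t) (hg0 : ∀ t, 0 ≤ t → 0 ≤ g t)
    (hfg : ∀ t, 0 ≤ t → f t * g t = t) :
    nr T ≤ nr (Matrix.toEuclideanCLM (𝕜 := ℂ) (Matrix.of fun i j =>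
      if i = j then
        (((1/2) * ‖cfc (fun t => f t ^ 2) (absOp (M i j)) +
            cfc (fun t => g t ^ 2) (absOp (star (M i j)))‖ : ℝ) : ℂ)
      else
        ((Real.sqrt ‖cfc (fun t => f t ^ 2) (absOp (M i j))‖ *
          Real.sqrt ‖cfc (fun t => g t ^ 2) (absOp (star (M i j)))‖ : ℝ) : ℂ))) :=
  nr_opMatrix_le'_general n M T hT f g hf hg hfg
end

section
/- Let A > 0 be strictly positive on a complex Hilbert space H, B = diag(A,A) on H ⊕ H, and T₁₂, T₂₁ ∈ B(H) admit A-adjoints. For T = [[0, T₁₂],[T₂₁, 0]]: (1/2)max{w_A(T₁₂+T₂₁), w_A(T₁₂−T₂₁)} ≤ w_B(T) ≤ (1/2)(w_A(T₁₂+T₂₁) + w_A(T₁₂−T₂₁)). -/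
/-!
Write `⟪x, y⟫_A = ⟪x, A y⟫`. For `z = (x, y)` one has `⟪z, T z⟫_B = ⟪x, T₁₂ y⟫_A + ⟪y, T₂₁ x⟫_A`,
and the polarization identity expresses four times this as
`q₊(x + y) - q₊(x - y) - i (q₋(x + i y) - q₋(x - i y))`, where `q_± u = ⟪u, (T₁₂ ± T₂₁) u⟫_A`;
with the parallelogram law for the `A`-seminorm this gives the upper bound. Testing `w_B(T)` on
`(x, x)` and `(x, i x)` gives the lower bound. All numerical radii involved are finite because an
operator with an `A`-adjoint is `A`-bounded: for the `A`-selfadjoint `Q = T^♯ T`, Cauchy–Schwarz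
gives `‖Q^k x‖_A² ≤ ‖x‖_A ‖Q^{2k} x‖_A`, and iterating along `k = 2^n` against the crude bound
`‖Q^n x‖_A ≤ ‖A‖^{1/2} ‖Q‖^n ‖x‖` yields `‖Q x‖_A ≤ ‖Q‖ ‖x‖_A`.
-/

open scoped ComplexOrder

/-- The A-numerical radius: `w_A(T) = sup{|⟨ATx,x⟩| : ⟨Ax,x⟩ = 1}` (with the paper's
convention `⟨u,v⟩ = inner v u` in Mathlib's notation). -/
noncomputable def wA {H : Type*} [NormedAddCommGroup H] [InnerProductSpace ℂ H]
    (A T : H →L[ℂ] H) : ℝ :=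
  sSup {r : ℝ | ∃ x : H, (inner ℂ x (A x) : ℂ) = 1 ∧ r = ‖(inner ℂ x (A (T x)) : ℂ)‖}

/-- The A-Crawford number: `m_A(T) = inf{|⟨ATx,x⟩| : ⟨Ax,x⟩ = 1}`. -/
noncomputable def mA {H : Type*} [NormedAddCommGroup H] [InnerProductSpace ℂ H]
    (A T : H →L[ℂ] H) : ℝ :=
  sInf {r : ℝ | ∃ x : H, (inner ℂ x (A x) : ℂ) = 1 ∧ r = ‖(inner ℂ x (A (T x)) : ℂ)‖}

/-- The A-operator seminorm: `‖T‖_A = sup{‖Tx‖_A/‖x‖_A : x ∈ closure (range A), x ≠ 0}`. -/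
noncomputable def normA {H : Type*} [NormedAddCommGroup H] [InnerProductSpace ℂ H]
    (A T : H →L[ℂ] H) : ℝ :=
  sSup {r : ℝ | ∃ x ∈ closure (Set.range A), x ≠ 0 ∧
    r = Real.sqrt ((inner ℂ (T x) (A (T x)) : ℂ)).re / Real.sqrt ((inner ℂ x (A x) : ℂ)).re}

open scoped InnerProductSpace InnerProduct

theorem le_of_forall_pow_two_pow_mul_le {a b c M : ℝ} (hb : 0 ≤ b) (hc : 0 < c)
    (h : ∀ n : ℕ, a ^ 2 ^ n * c ≤ M * b ^ 2 ^ n) : a ≤ b := by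
  by_contra! hba
  have ha0 : 0 < a := hb.trans_lt hba
  have hlim : Filter.Tendsto (fun n : ℕ => M * (b / a) ^ 2 ^ n) Filter.atTop (nhds 0) := by
    simpa using ((tendsto_pow_atTop_nhds_zero_of_lt_one (div_nonneg hb ha0.le)
      ((div_lt_one ha0).2 hba)).comp (tendsto_pow_atTop_atTop_of_one_lt one_lt_two)).const_mul M
  refine hc.not_ge (ge_of_tendsto' hlim fun n => ?_)
  have hpow : 0 < a ^ 2 ^ n := by positivity
  rw [div_pow, mul_div_assoc', le_div_iff₀ hpow, mul_comm]
  exact h n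

theorem le_mul_of_sq_le_mul_two_mul {u : ℕ → ℝ} {M ρ : ℝ} (hu : ∀ n, 0 ≤ u n) (hρ : 0 ≤ ρ)
    (hsq : ∀ k, u k ^ 2 ≤ u 0 * u (2 * k)) (hgeom : ∀ n, u n ≤ M * ρ ^ n) :
    u 1 ≤ ρ * u 0 := by
  rcases (hu 0).eq_or_lt with h0 | h0
  · have : u 1 ^ 2 ≤ 0 := by simpa [← h0] using hsq 1
    rw [← h0, mul_zero]
    exact (sq_nonpos_iff _).1 this |>.le
  have hiter : ∀ n : ℕ, u 1 ^ 2 ^ n * u 0 ≤ u 0 ^ 2 ^ n * u (2 ^ n) := by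
    intro n
    induction n with
    | zero => simp [mul_comm]
    | succ n ih =>
      have key : u 1 ^ 2 ^ (n + 1) * u 0 * u 0 ≤ u 0 ^ 2 ^ (n + 1) * u (2 ^ (n + 1)) * u 0 := by
        calc u 1 ^ 2 ^ (n + 1) * u 0 * u 0 = (u 1 ^ 2 ^ n * u 0) ^ 2 := by ring
          _ ≤ (u 0 ^ 2 ^ n * u (2 ^ n)) ^ 2 := pow_le_pow_left₀ (by have := hu 1; positivity) ih 2
          _ = u 0 ^ 2 ^ (n + 1) * u (2 ^ n) ^ 2 := by ring
          _ ≤ u 0 ^ 2 ^ (n + 1) * (u 0 * u (2 * 2 ^ n)) := by gcongr; exact hsq _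
          _ = u 0 ^ 2 ^ (n + 1) * u (2 ^ (n + 1)) * u 0 := by rw [← pow_succ']; ring
      exact le_of_mul_le_mul_right key h0
  refine le_of_forall_pow_two_pow_mul_le (M := M) (by positivity) h0 fun n => ?_
  calc u 1 ^ 2 ^ n * u 0 ≤ u 0 ^ 2 ^ n * u (2 ^ n) := hiter n
    _ ≤ u 0 ^ 2 ^ n * (M * ρ ^ 2 ^ n) := by gcongr; exact hgeom _
    _ = M * (ρ * u 0) ^ 2 ^ n := by ring

namespace ContinuousLinearMap

variable {K : Type*} [NormedAddCommGroup K] [InnerProductSpace ℂ K] {A : K →L[ℂ] K}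

theorem isPositive_of_inner_nonneg (h : ∀ x, 0 ≤ ⟪x, A x⟫_ℂ) : A.IsPositive := by
  have hleft : ∀ x, 0 ≤ ⟪A x, x⟫_ℂ := fun x => by
    rw [← inner_conj_symm]; exact star_nonneg_iff.2 (h x)
  refine (isPositive_iff A).2 ⟨?_, hleft⟩
  exact (LinearMap.isSymmetric_iff_inner_map_self_real _).2 fun x =>
    (IsSelfAdjoint.of_nonneg (hleft x)).star_eq

theorem IsPositive.inner_apply_self_eq_re (hA : A.IsPositive) (x : K) :
    ⟪x, A x⟫_ℂ = ((⟪x, A x⟫_ℂ).re : ℂ) :=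
  Complex.eq_re_of_ofReal_le (hA.inner_nonneg_right x)

theorem IsPositive.re_inner_apply_self_nonneg (hA : A.IsPositive) (x : K) :
    0 ≤ (⟪x, A x⟫_ℂ).re :=
  hA.re_inner_nonneg_right x

theorem IsPositive.norm_inner_apply_sq_le (hA : A.IsPositive) (x y : K) :
    ‖⟪x, A y⟫_ℂ‖ ^ 2 ≤ (⟪x, A x⟫_ℂ).re * (⟪y, A y⟫_ℂ).re := by
  let core : PreInnerProductSpace.Core ℂ K :=
    { inner := fun a b => ⟪a, A b⟫_ℂ
      conj_inner_symm := fun a b => by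
        simp only [inner_conj_symm, hA.inner_left_eq_inner_right]
      re_inner_nonneg := hA.re_inner_apply_self_nonneg
      add_left := fun a b c => inner_add_left _ _ _
      smul_left := fun a b r => inner_smul_left _ _ _ }
  have h := InnerProductSpace.Core.inner_mul_inner_self_le (c := core) x y
  have hsymm : ‖⟪y, A x⟫_ℂ‖ = ‖⟪x, A y⟫_ℂ‖ := by
    rw [← inner_conj_symm, ← hA.inner_left_eq_inner_right, RCLike.norm_conj]
  rw [sq]
  exact hsymm ▸ h

theorem re_inner_apply_self_le (A : K →L[ℂ] K) (x : K) :
    (⟪x, A x⟫_ℂ).re ≤ ‖A‖ * ‖x‖ ^ 2 :=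
  calc (⟪x, A x⟫_ℂ).re ≤ ‖⟪x, A x⟫_ℂ‖ := Complex.re_le_norm _
    _ ≤ ‖x‖ * ‖A x‖ := norm_inner_le_norm _ _
    _ ≤ ‖x‖ * (‖A‖ * ‖x‖) := by gcongr; exact A.le_opNorm x
    _ = ‖A‖ * ‖x‖ ^ 2 := by ring

theorem norm_pow_apply_le (Q : K →L[ℂ] K) (n : ℕ) (x : K) : ‖(Q ^ n) x‖ ≤ ‖Q‖ ^ n * ‖x‖ := by
  induction n with
  | zero => simp
  | succ n ih =>
    rw [pow_succ', mul_apply_eq_comp, pow_succ', mul_assoc]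
    exact (Q.le_opNorm _).trans (by gcongr)

variable [CompleteSpace K]

/-- `S` is an `A`-adjoint of `T`, i.e. `⟪T x, y⟫_A = ⟪x, S y⟫_A` for `⟪x, y⟫_A = ⟪x, A y⟫`. -/
def IsAdjointWrt (A T S : K →L[ℂ] K) : Prop :=
  A.comp S = (adjoint T).comp A

theorem isAdjointWrt_iff {T S : K →L[ℂ] K} : IsAdjointWrt A T S ↔ A * S = star T * A :=
  Iff.rfl

namespace IsAdjointWrt

variable {T S T' S' Q : K →L[ℂ] K}

theorem inner_apply (h : IsAdjointWrt A T S) (a b : K) : ⟪a, A (S b)⟫_ℂ = ⟪T a, A b⟫_ℂ := by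
  rw [← comp_apply, h, comp_apply, adjoint_inner_right]

theorem add (h : IsAdjointWrt A T S) (h' : IsAdjointWrt A T' S') :
    IsAdjointWrt A (T + T') (S + S') := by
  rw [isAdjointWrt_iff] at *
  rw [mul_add, h, h', star_add, add_mul]

theorem sub (h : IsAdjointWrt A T S) (h' : IsAdjointWrt A T' S') :
    IsAdjointWrt A (T - T') (S - S') := by
  rw [isAdjointWrt_iff] at *
  rw [mul_sub, h, h', star_sub, sub_mul]

theorem mul (h : IsAdjointWrt A T S) (h' : IsAdjointWrt A T' S') :
    IsAdjointWrt A (T * T') (S' * S) := by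
  rw [isAdjointWrt_iff] at *
  rw [← mul_assoc, h', mul_assoc, h, star_mul, mul_assoc]

theorem symm (hA : IsSelfAdjoint A) (h : IsAdjointWrt A T S) : IsAdjointWrt A S T := by
  rw [isAdjointWrt_iff] at *
  simpa [star_mul, hA.star_eq] using (congrArg star h).symm

theorem pow (h : IsAdjointWrt A Q Q) (n : ℕ) : IsAdjointWrt A (Q ^ n) (Q ^ n) := by
  induction n with
  | zero => simp [isAdjointWrt_iff]
  | succ n ih => simpa only [← pow_succ, ← pow_succ'] using ih.mul h

end IsAdjointWrt

variable {T S Q : K →L[ℂ] K}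

theorem IsPositive.re_inner_apply_le_of_isAdjointWrt_self (hA : A.IsPositive)
    (hQ : IsAdjointWrt A Q Q) (x : K) :
    (⟪Q x, A (Q x)⟫_ℂ).re ≤ ‖Q‖ ^ 2 * (⟪x, A x⟫_ℂ).re := by
  set u : ℕ → ℝ := fun n => (⟪(Q ^ n) x, A ((Q ^ n) x)⟫_ℂ).re with hu_def
  have hu : ∀ n, 0 ≤ u n := fun n => hA.re_inner_apply_self_nonneg _
  have hu0 : u 0 = (⟪x, A x⟫_ℂ).re := by simp [u]
  have hsq : ∀ k, u k ^ 2 ≤ u 0 * u (2 * k) := fun k => by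
    have hk : u k = (⟪x, A ((Q ^ (2 * k)) x)⟫_ℂ).re := by
      rw [hu_def, two_mul, pow_add, mul_apply_eq_comp, (hQ.pow k).inner_apply]
    calc u k ^ 2 ≤ ‖⟪x, A ((Q ^ (2 * k)) x)⟫_ℂ‖ ^ 2 :=
          pow_le_pow_left₀ (hu k) (hk ▸ Complex.re_le_norm _) 2
      _ ≤ u 0 * u (2 * k) := hu0 ▸ hA.norm_inner_apply_sq_le _ _
  have hgeom : ∀ n, u n ≤ ‖A‖ * ‖x‖ ^ 2 * (‖Q‖ ^ 2) ^ n := fun n =>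
    calc u n ≤ ‖A‖ * ‖(Q ^ n) x‖ ^ 2 := re_inner_apply_self_le A _
      _ ≤ ‖A‖ * (‖Q‖ ^ n * ‖x‖) ^ 2 := by gcongr; exact norm_pow_apply_le Q n x
      _ = ‖A‖ * ‖x‖ ^ 2 * (‖Q‖ ^ 2) ^ n := by ring
  simpa [u] using le_mul_of_sq_le_mul_two_mul hu (by positivity) hsq hgeom

theorem IsPositive.re_inner_apply_le (hA : A.IsPositive) (hT : IsAdjointWrt A T S) (x : K) :
    (⟪T x, A (T x)⟫_ℂ).re ≤ ‖S * T‖ * (⟪x, A x⟫_ℂ).re := by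
  have hST : IsAdjointWrt A (S * T) (S * T) := (hT.symm hA.isSelfAdjoint).mul hT
  have hx : ⟪T x, A (T x)⟫_ℂ = ⟪x, A ((S * T) x)⟫_ℂ := by
    rw [mul_apply_eq_comp, hT.inner_apply]
  refine le_of_sq_le_sq ?_ (by have := hA.re_inner_apply_self_nonneg x; positivity)
  calc (⟪T x, A (T x)⟫_ℂ).re ^ 2 ≤ ‖⟪x, A ((S * T) x)⟫_ℂ‖ ^ 2 :=
        pow_le_pow_left₀ (hA.re_inner_apply_self_nonneg _) (hx ▸ Complex.re_le_norm _) 2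
    _ ≤ (⟪x, A x⟫_ℂ).re * (⟪(S * T) x, A ((S * T) x)⟫_ℂ).re := hA.norm_inner_apply_sq_le _ _
    _ ≤ (⟪x, A x⟫_ℂ).re * (‖S * T‖ ^ 2 * (⟪x, A x⟫_ℂ).re) := by
        gcongr
        · exact hA.re_inner_apply_self_nonneg x
        · exact hA.re_inner_apply_le_of_isAdjointWrt_self hST x
    _ = (‖S * T‖ * (⟪x, A x⟫_ℂ).re) ^ 2 := by ring

theorem IsPositive.exists_norm_inner_apply_le (hA : A.IsPositive) (hT : IsAdjointWrt A T S) :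
    ∃ M, ∀ x, ‖⟪x, A (T x)⟫_ℂ‖ ≤ M * (⟪x, A x⟫_ℂ).re := by
  refine ⟨√‖S * T‖, fun x => le_of_sq_le_sq ?_ ?_⟩
  · calc ‖⟪x, A (T x)⟫_ℂ‖ ^ 2 ≤ (⟪x, A x⟫_ℂ).re * (⟪T x, A (T x)⟫_ℂ).re :=
          hA.norm_inner_apply_sq_le _ _
      _ ≤ (⟪x, A x⟫_ℂ).re * (‖S * T‖ * (⟪x, A x⟫_ℂ).re) := by
          gcongr
          · exact hA.re_inner_apply_self_nonneg x
          · exact hA.re_inner_apply_le hT x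
      _ = (√‖S * T‖ * (⟪x, A x⟫_ℂ).re) ^ 2 := by
          rw [mul_pow, Real.sq_sqrt (norm_nonneg _)]; ring
  · have := hA.re_inner_apply_self_nonneg x; positivity

end ContinuousLinearMap

section NumericalRadius

variable {K : Type*} [NormedAddCommGroup K] [InnerProductSpace ℂ K] {A T P R : K →L[ℂ] K}

theorem wA_nonneg (A T : K →L[ℂ] K) : 0 ≤ wA A T :=
  Real.sSup_nonneg fun _ ⟨_, _, hr⟩ => hr ▸ norm_nonneg _

theorem wA_le_of_forall_norm_inner_le {M : ℝ} (hM : 0 ≤ M)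
    (h : ∀ x, ‖⟪x, A (T x)⟫_ℂ‖ ≤ M * (⟪x, A x⟫_ℂ).re) : wA A T ≤ M :=
  Real.sSup_le (by rintro r ⟨x, hx, rfl⟩; simpa [hx] using h x) hM

theorem ContinuousLinearMap.IsPositive.norm_inner_le_wA_mul (hA : A.IsPositive)
    (hT : ∃ M, ∀ x, ‖⟪x, A (T x)⟫_ℂ‖ ≤ M * (⟪x, A x⟫_ℂ).re) (x : K) :
    ‖⟪x, A (T x)⟫_ℂ‖ ≤ wA A T * (⟪x, A x⟫_ℂ).re := by
  obtain ⟨M, hM⟩ := hT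
  have hbdd : BddAbove {r : ℝ | ∃ x : K, ⟪x, A x⟫_ℂ = 1 ∧ r = ‖⟪x, A (T x)⟫_ℂ‖} :=
    ⟨M, by rintro r ⟨y, hy, rfl⟩; simpa [hy] using hM y⟩
  set q := (⟪x, A x⟫_ℂ).re
  rcases (hA.re_inner_apply_self_nonneg x).eq_or_lt with hq | hq
  · have h := hA.norm_inner_apply_sq_le x (T x)
    rw [← hq, zero_mul, sq_nonpos_iff, norm_eq_zero] at h
    simp [h, q, ← hq]
  set c : ℂ := (((√q)⁻¹ : ℝ) : ℂ)
  have hc : ∀ y, ⟪c • x, A (c • y)⟫_ℂ = (q⁻¹ : ℝ) * ⟪x, A y⟫_ℂ := fun y => by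
    rw [map_smul, inner_smul_left, inner_smul_right, ← mul_assoc, Complex.conj_ofReal,
      ← Complex.ofReal_mul, ← mul_inv, Real.mul_self_sqrt hq.le]
  have hcx : ⟪c • x, A (c • x)⟫_ℂ = 1 := by
    rw [hc, hA.inner_apply_self_eq_re, ← Complex.ofReal_mul, inv_mul_cancel₀ hq.ne',
      Complex.ofReal_one]
  have hle : q⁻¹ * ‖⟪x, A (T x)⟫_ℂ‖ ≤ wA A T := by
    refine le_csSup hbdd ⟨c • x, hcx, ?_⟩
    rw [map_smul, hc, norm_mul, Complex.norm_real, Real.norm_of_nonneg (inv_nonneg.2 hq.le)]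
  calc ‖⟪x, A (T x)⟫_ℂ‖ = q * (q⁻¹ * ‖⟪x, A (T x)⟫_ℂ‖) := by
        rw [← mul_assoc, mul_inv_cancel₀ hq.ne', one_mul]
    _ ≤ wA A T * q := by rw [mul_comm]; gcongr

theorem parallelogram_law_apply (A : K →L[ℂ] K) (x y : K) :
    ⟪x + y, A (x + y)⟫_ℂ + ⟪x - y, A (x - y)⟫_ℂ = 2 * (⟪x, A x⟫_ℂ + ⟪y, A y⟫_ℂ) := by
  simp only [map_add, map_sub, inner_add_left, inner_add_right, inner_sub_left, inner_sub_right]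
  ring

theorem inner_I_smul_apply_I_smul (A : K →L[ℂ] K) (x : K) :
    ⟪Complex.I • x, A (Complex.I • x)⟫_ℂ = ⟪x, A x⟫_ℂ := by
  rw [map_smul, inner_smul_left, inner_smul_right, ← mul_assoc, Complex.conj_I, neg_mul,
    Complex.I_mul_I, neg_neg, one_mul]

theorem four_mul_inner_offdiag (A P R : K →L[ℂ] K) (x y : K) :
    4 * (⟪x, A (P y)⟫_ℂ + ⟪y, A (R x)⟫_ℂ) =
      (⟪x + y, A ((P + R) (x + y))⟫_ℂ - ⟪x - y, A ((P + R) (x - y))⟫_ℂ) -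
      Complex.I * (⟪x + Complex.I • y, A ((P - R) (x + Complex.I • y))⟫_ℂ -
        ⟪x - Complex.I • y, A ((P - R) (x - Complex.I • y))⟫_ℂ) := by
  simp only [add_apply, sub_apply, map_add, map_sub, map_smul, inner_add_left,
    inner_add_right, inner_sub_left, inner_sub_right, inner_smul_left, inner_smul_right,
    Complex.conj_I]
  ring_nf
  simp only [Complex.I_sq]
  ring

theorem ContinuousLinearMap.IsPositive.norm_inner_offdiag_le (hA : A.IsPositive)
    (hS : ∃ M, ∀ x, ‖⟪x, A ((P + R) x)⟫_ℂ‖ ≤ M * (⟪x, A x⟫_ℂ).re)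
    (hD : ∃ M, ∀ x, ‖⟪x, A ((P - R) x)⟫_ℂ‖ ≤ M * (⟪x, A x⟫_ℂ).re) (x y : K) :
    ‖⟪x, A (P y)⟫_ℂ + ⟪y, A (R x)⟫_ℂ‖ ≤
      (wA A (P + R) + wA A (P - R)) / 2 * ((⟪x, A x⟫_ℂ).re + (⟪y, A y⟫_ℂ).re) := by
  have hpar : ∀ z, (⟪x + z, A (x + z)⟫_ℂ).re + (⟪x - z, A (x - z)⟫_ℂ).re =
      2 * ((⟪x, A x⟫_ℂ).re + (⟪z, A z⟫_ℂ).re) := fun z => by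
    simpa using congrArg Complex.re (parallelogram_law_apply A x z)
  have hparI := hpar (Complex.I • y)
  rw [inner_I_smul_apply_I_smul] at hparI
  have hS' := hA.norm_inner_le_wA_mul hS
  have hD' := hA.norm_inner_le_wA_mul hD
  have h4 : 4 * ‖⟪x, A (P y)⟫_ℂ + ⟪y, A (R x)⟫_ℂ‖ ≤
      wA A (P + R) * ((⟪x + y, A (x + y)⟫_ℂ).re + (⟪x - y, A (x - y)⟫_ℂ).re) +
      wA A (P - R) * ((⟪x + Complex.I • y, A (x + Complex.I • y)⟫_ℂ).re +
        (⟪x - Complex.I • y, A (x - Complex.I • y)⟫_ℂ).re) := by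
    rw [← Complex.norm_ofNat 4, ← norm_mul, four_mul_inner_offdiag, mul_add, mul_add]
    refine (norm_sub_le _ _).trans (add_le_add ?_ ?_)
    · exact (norm_sub_le _ _).trans (add_le_add (hS' _) (hS' _))
    · rw [norm_mul, Complex.norm_I, one_mul]
      exact (norm_sub_le _ _).trans (add_le_add (hD' _) (hD' _))
  rw [hpar, hparI] at h4
  linarith

end NumericalRadius

section OffDiagonal

variable {H : Type*} [NormedAddCommGroup H] [InnerProductSpace ℂ H] {A P R : H →L[ℂ] H}
  {B T : (PiLp 2 fun _ : Fin 2 => H) →L[ℂ] (PiLp 2 fun _ : Fin 2 => H)}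

theorem inner_apply_diag (hB : ∀ x i, B x i = A (x i)) (z w : PiLp 2 fun _ : Fin 2 => H) :
    ⟪z, B w⟫_ℂ = ⟪z 0, A (w 0)⟫_ℂ + ⟪z 1, A (w 1)⟫_ℂ := by
  rw [PiLp.inner_apply, Fin.sum_univ_two, hB, hB]

theorem re_inner_apply_diag (hB : ∀ x i, B x i = A (x i)) (z : PiLp 2 fun _ : Fin 2 => H) :
    (⟪z, B z⟫_ℂ).re = (⟪z 0, A (z 0)⟫_ℂ).re + (⟪z 1, A (z 1)⟫_ℂ).re := by
  rw [inner_apply_diag hB, Complex.add_re]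

theorem ContinuousLinearMap.IsPositive.diag (hA : A.IsPositive) (hB : ∀ x i, B x i = A (x i)) :
    B.IsPositive :=
  ContinuousLinearMap.isPositive_of_inner_nonneg fun z => by
    rw [inner_apply_diag hB]
    exact add_nonneg (hA.inner_nonneg_right _) (hA.inner_nonneg_right _)

theorem inner_apply_offdiag (hB : ∀ x i, B x i = A (x i))
    (hT : ∀ x, T x 0 = P (x 1) ∧ T x 1 = R (x 0)) (z : PiLp 2 fun _ : Fin 2 => H) :
    ⟪z, B (T z)⟫_ℂ = ⟪z 0, A (P (z 1))⟫_ℂ + ⟪z 1, A (R (z 0))⟫_ℂ := by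
  rw [inner_apply_diag hB, (hT z).1, (hT z).2]

theorem ContinuousLinearMap.IsPositive.norm_inner_apply_offdiag_le (hA : A.IsPositive)
    (hB : ∀ x i, B x i = A (x i)) (hT : ∀ x, T x 0 = P (x 1) ∧ T x 1 = R (x 0))
    (hS : ∃ M, ∀ x, ‖⟪x, A ((P + R) x)⟫_ℂ‖ ≤ M * (⟪x, A x⟫_ℂ).re)
    (hD : ∃ M, ∀ x, ‖⟪x, A ((P - R) x)⟫_ℂ‖ ≤ M * (⟪x, A x⟫_ℂ).re)
    (z : PiLp 2 fun _ : Fin 2 => H) :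
    ‖⟪z, B (T z)⟫_ℂ‖ ≤ (wA A (P + R) + wA A (P - R)) / 2 * (⟪z, B z⟫_ℂ).re := by
  rw [inner_apply_offdiag hB hT, re_inner_apply_diag hB]
  exact hA.norm_inner_offdiag_le hS hD _ _

theorem ContinuousLinearMap.IsPositive.wA_add_le_two_mul_wA_offdiag (hA : A.IsPositive)
    (hB : ∀ x i, B x i = A (x i)) (hT : ∀ x, T x 0 = P (x 1) ∧ T x 1 = R (x 0))
    (hBT : ∃ M, ∀ z, ‖⟪z, B (T z)⟫_ℂ‖ ≤ M * (⟪z, B z⟫_ℂ).re) :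
    wA A (P + R) ≤ 2 * wA B T := by
  refine wA_le_of_forall_norm_inner_le (by have := wA_nonneg B T; positivity) fun x => ?_
  have h := (hA.diag hB).norm_inner_le_wA_mul hBT (WithLp.toLp 2 ![x, x])
  rw [inner_apply_offdiag hB hT, re_inner_apply_diag hB] at h
  simp only [Matrix.cons_val_zero, Matrix.cons_val_one] at h
  rw [← inner_add_right, ← map_add, ← add_apply] at h
  linarith

theorem ContinuousLinearMap.IsPositive.wA_sub_le_two_mul_wA_offdiag (hA : A.IsPositive)
    (hB : ∀ x i, B x i = A (x i)) (hT : ∀ x, T x 0 = P (x 1) ∧ T x 1 = R (x 0))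
    (hBT : ∃ M, ∀ z, ‖⟪z, B (T z)⟫_ℂ‖ ≤ M * (⟪z, B z⟫_ℂ).re) :
    wA A (P - R) ≤ 2 * wA B T := by
  refine wA_le_of_forall_norm_inner_le (by have := wA_nonneg B T; positivity) fun x => ?_
  have h := (hA.diag hB).norm_inner_le_wA_mul hBT (WithLp.toLp 2 ![x, Complex.I • x])
  rw [inner_apply_offdiag hB hT, re_inner_apply_diag hB] at h
  have hval : ⟪x, A (P (Complex.I • x))⟫_ℂ + ⟪Complex.I • x, A (R x)⟫_ℂ =
      Complex.I * ⟪x, A ((P - R) x)⟫_ℂ := by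
    simp only [map_smul, sub_apply, map_sub, inner_smul_left, inner_smul_right, inner_sub_right,
      Complex.conj_I]
    ring
  simp only [Matrix.cons_val_zero, Matrix.cons_val_one] at h
  rw [hval, inner_I_smul_apply_I_smul, norm_mul, Complex.norm_I, one_mul] at h
  linarith

end OffDiagonal

/-- For `A > 0`, `B = diag(A,A)` and `T = [[0,T₁₂],[T₂₁,0]]` on `H ⊕ H`:
`(1/2)max{w_A(T₁₂+T₂₁), w_A(T₁₂−T₂₁)} ≤ w_B(T) ≤ (1/2)(w_A(T₁₂+T₂₁) + w_A(T₁₂−T₂₁))`. -/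
theorem wB_offdiag_bounds {H : Type*} [NormedAddCommGroup H] [InnerProductSpace ℂ H]
    [CompleteSpace H] (A T12 T21 T12s T21s : H →L[ℂ] H)
    (hA : ∀ x : H, x ≠ 0 → 0 < (inner ℂ x (A x) : ℂ))
    (hT12s : A.comp T12s = (ContinuousLinearMap.adjoint T12).comp A)
    (hT21s : A.comp T21s = (ContinuousLinearMap.adjoint T21).comp A)
    (B T : (PiLp 2 fun _ : Fin 2 => H) →L[ℂ] (PiLp 2 fun _ : Fin 2 => H))
    (hB : ∀ x i, B x i = A (x i))
    (hT : ∀ x, T x 0 = T12 (x 1) ∧ T x 1 = T21 (x 0)) :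
    (1/2) * max (wA A (T12 + T21)) (wA A (T12 - T21)) ≤ wA B T ∧
    wA B T ≤ (1/2) * (wA A (T12 + T21) + wA A (T12 - T21)) := by
  have hApos : A.IsPositive := ContinuousLinearMap.isPositive_of_inner_nonneg fun x => by
    rcases eq_or_ne x 0 with rfl | hx
    · simp
    · exact (hA x hx).le
  have hS := hApos.exists_norm_inner_apply_le (.add hT12s hT21s)
  have hD := hApos.exists_norm_inner_apply_le (.sub hT12s hT21s)
  have hBT := hApos.norm_inner_apply_offdiag_le hB hT hS hD
  have hSB := hApos.wA_add_le_two_mul_wA_offdiag hB hT ⟨_, hBT⟩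
  have hDB := hApos.wA_sub_le_two_mul_wA_offdiag hB hT ⟨_, hBT⟩
  refine ⟨by linarith [max_le hSB hDB], ?_⟩
  have := wA_nonneg A (T12 + T21)
  have := wA_nonneg A (T12 - T21)
  exact (wA_le_of_forall_norm_inner_le (by positivity) hBT).trans_eq (by ring)
end

section
/- Let A > 0 on H, B = diag(A,A), T₁₂, T₂₁ ∈ B(H) admitting A-adjoints, T = [[0, T₁₂],[T₂₁, 0]]. Then w_B(T) = (1/2) sup_{θ∈ℝ} ‖e^{iθ} T₁₂ + e^{−iθ} T₂₁^{♯}‖_A, where T₂₁^{♯} is the A-adjoint of T₂₁ and ‖·‖_A the A-operator seminorm. -/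
open scoped ComplexOrder

/-!
Write `‖x‖_A = ‖R x‖` and `⟨u, v⟩_A = ⟪R u, R v⟫` with `R = A ^ (1 / 2)`. For `x = (a, b)`,
`⟪x, B T x⟫ = ⟨a, T₁₂ b⟩_A + conj ⟨a, T₂₁^♯ b⟩_A`, and for complex numbers
`|z + conj w| ≤ |z| + |w| = max_θ |e^{iθ} z + e^{-iθ} w|`. Together with `‖a‖_A ‖b‖_A ≤ 1 / 2`
this bounds `w_B(T)` by `½ sup_θ ‖e^{iθ} T₁₂ + e^{-iθ} T₂₁^♯‖_A`; conversely, taking `a` along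
`(e^{iθ} T₁₂ + e^{-iθ} T₂₁^♯) b` and rotating it by a suitable phase attains
`½ ‖(e^{iθ} T₁₂ + e^{-iθ} T₂₁^♯) b‖_A / ‖b‖_A`.

Since `T₂₁^♯` has the `A`-adjoint `T₂₁`, it is `A`-bounded, so either all the operators
`e^{iθ} T₁₂ + e^{-iθ} T₂₁^♯` are `A`-bounded or none is; in the second case both sides are `0`,
the value of `sSup` on sets that are not bounded above.
-/

open scoped InnerProductSpace ComplexConjugate

namespace Complex

theorem exists_norm_exp_mul_add_exp_neg_mul (z w : ℂ) :
    ∃ θ : ℝ, ‖exp (θ * I) * z + exp (-(θ * I)) * w‖ = ‖z‖ + ‖w‖ := by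
  set θ : ℝ := (w.arg - z.arg) / 2
  have h : exp (θ * I) * z + exp (-(θ * I)) * w
      = ((‖z‖ + ‖w‖ : ℝ) : ℂ) * exp (((z.arg + w.arg) / 2 : ℝ) * I) :=
    calc exp (θ * I) * z + exp (-(θ * I)) * w
        = exp (θ * I) * (‖z‖ * exp (z.arg * I)) + exp (-(θ * I)) * (‖w‖ * exp (w.arg * I)) := by
          rw [norm_mul_exp_arg_mul_I, norm_mul_exp_arg_mul_I]
      _ = ‖z‖ * exp (θ * I + z.arg * I) + ‖w‖ * exp (-(θ * I) + w.arg * I) := by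
          rw [exp_add, exp_add]; ring
      _ = _ := by simp only [θ]; push_cast; ring_nf
  refine ⟨θ, ?_⟩
  rw [h, norm_mul, norm_exp_ofReal_mul_I, mul_one, norm_real, Real.norm_of_nonneg (by positivity)]

theorem norm_exp_neg_ofReal_mul_I (θ : ℝ) : ‖exp (-(θ * I))‖ = 1 := by
  rw [← neg_mul, ← ofReal_neg, norm_exp_ofReal_mul_I]

end Complex

theorem le_of_forall_sq_le_succ {b : ℕ → ℝ} {K N : ℝ} (hb : 0 ≤ b 0) (hN : 0 ≤ N)
    (hsq : ∀ n, b n ^ 2 ≤ b (n + 1)) (hbd : ∀ n, b n ≤ K * N ^ 2 ^ n) : b 0 ≤ N := by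
  have hpow : ∀ n, b 0 ^ 2 ^ n ≤ b n := by
    intro n
    induction n with
    | zero => simp
    | succ n ih =>
      calc b 0 ^ 2 ^ (n + 1) = (b 0 ^ 2 ^ n) ^ 2 := by rw [pow_succ, pow_mul]
        _ ≤ b n ^ 2 := pow_le_pow_left₀ (pow_nonneg hb _) ih 2
        _ ≤ b (n + 1) := hsq n
  rcases hN.eq_or_lt with rfl | hN
  · simpa using hbd 0
  by_contra! hlt
  have hr : 1 < b 0 / N := (one_lt_div hN).mpr hlt
  obtain ⟨n, hn⟩ := pow_unbounded_of_one_lt K hr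
  have hK : (b 0 / N) ^ 2 ^ n ≤ K := by
    rw [div_pow, div_le_iff₀ (by positivity)]
    exact (hpow n).trans (hbd n)
  have := pow_le_pow_right₀ hr.le (Nat.lt_two_pow_self (n := n)).le
  linarith

theorem Real.iSup_sSup_eq_sSup_iUnion {ι : Type*} {N : ι → Set ℝ} (hN : ∀ i, ∀ r ∈ N i, 0 ≤ r)
    (hbdd : ∀ i j, BddAbove (N i) → BddAbove (N j)) : ⨆ i, sSup (N i) = sSup (⋃ i, N i) := by
  have h0 : 0 ≤ sSup (⋃ i, N i) := Real.sSup_nonneg fun r hr => by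
    obtain ⟨i, hi⟩ := Set.mem_iUnion.mp hr
    exact hN i r hi
  by_cases hU : BddAbove (⋃ i, N i)
  · have hle : ∀ i, sSup (N i) ≤ sSup (⋃ i, N i) := fun i =>
      Real.sSup_le (fun r hr => le_csSup hU (Set.mem_iUnion_of_mem i hr)) h0
    refine le_antisymm (Real.iSup_le hle h0) (Real.sSup_le (fun r hr => ?_)
      (Real.iSup_nonneg fun i => Real.sSup_nonneg (hN i)))
    obtain ⟨i, hi⟩ := Set.mem_iUnion.mp hr
    exact (le_csSup (hU.mono (Set.subset_iUnion N i)) hi).trans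
      (le_ciSup ⟨_, Set.forall_mem_range.mpr hle⟩ i)
  rw [Real.sSup_of_not_bddAbove hU]
  by_cases hall : ∀ i, BddAbove (N i)
  · refine Real.iSup_of_not_bddAbove fun ⟨C, hC⟩ => hU ⟨C, fun r hr => ?_⟩
    obtain ⟨i, hi⟩ := Set.mem_iUnion.mp hr
    exact (le_csSup (hall i) hi).trans (hC ⟨i, rfl⟩)
  obtain ⟨i, hi⟩ := not_forall.mp hall
  have h : ∀ j, sSup (N j) = 0 := fun j => Real.sSup_of_not_bddAbove fun hj => hi (hbdd j i hj)
  simp [h]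

section RelativeBound

variable {𝕜 E F : Type*} [RCLike 𝕜] [NormedAddCommGroup E] [NormedSpace 𝕜 E]
  [NormedAddCommGroup F] [InnerProductSpace 𝕜 F] {R : E →L[𝕜] F}

theorem inner_map_pow_apply_eq {M : E →L[𝕜] E}
    (hM : ∀ u w, ⟪R (M u), R w⟫_𝕜 = ⟪R u, R (M w)⟫_𝕜) (n : ℕ) (u w : E) :
    ⟪R ((M ^ n) u), R w⟫_𝕜 = ⟪R u, R ((M ^ n) w)⟫_𝕜 := by
  induction n generalizing u with
  | zero => rfl
  | succ n ih =>
    rw [pow_succ, mul_apply_eq_comp, ih, hM, ← mul_apply_eq_comp, ← pow_mul_comm']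

theorem sq_norm_map_pow_apply_le {M : E →L[𝕜] E}
    (hM : ∀ u w, ⟪R (M u), R w⟫_𝕜 = ⟪R u, R (M w)⟫_𝕜) (n : ℕ) (x : E) :
    ‖R ((M ^ n) x)‖ ^ 2 ≤ ‖R ((M ^ (2 * n)) x)‖ * ‖R x‖ := by
  have h : ⟪R ((M ^ n) x), R ((M ^ n) x)⟫_𝕜 = ⟪R ((M ^ (2 * n)) x), R x⟫_𝕜 := by
    rw [← inner_map_pow_apply_eq hM, two_mul, pow_add, mul_apply_eq_comp]
  calc ‖R ((M ^ n) x)‖ ^ 2 = RCLike.re ⟪R ((M ^ (2 * n)) x), R x⟫_𝕜 := by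
        rw [← h, inner_self_eq_norm_sq]
    _ ≤ ‖⟪R ((M ^ (2 * n)) x), R x⟫_𝕜‖ := RCLike.re_le_norm _
    _ ≤ ‖R ((M ^ (2 * n)) x)‖ * ‖R x‖ := norm_inner_le_norm _ _

/-- Iterating `sq_norm_map_pow_apply_le` along the powers `M ^ 2 ^ n`, the constant
`‖R‖ * ‖x‖ / ‖R x‖` disappears in the `2 ^ n`-th root (`le_of_forall_sq_le_succ`). -/
theorem norm_map_apply_le_of_symm {M : E →L[𝕜] E}
    (hM : ∀ u w, ⟪R (M u), R w⟫_𝕜 = ⟪R u, R (M w)⟫_𝕜) (x : E) :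
    ‖R (M x)‖ ≤ ‖M‖ * ‖R x‖ := by
  rcases eq_or_ne (R x) 0 with hx | hx
  · simpa [hx] using sq_norm_map_pow_apply_le hM 1 x
  have hx' : 0 < ‖R x‖ := norm_pos_iff.mpr hx
  rw [← div_le_iff₀ hx']
  have key := le_of_forall_sq_le_succ (b := fun n => ‖R ((M ^ 2 ^ n) x)‖ / ‖R x‖)
    (K := ‖R‖ * ‖x‖ / ‖R x‖) (by positivity) (norm_nonneg M) ?_ ?_
  · simpa using key
  · intro n
    have h := sq_norm_map_pow_apply_le hM (2 ^ n) x
    rw [← pow_succ'] at h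
    rw [div_pow, div_le_div_iff₀ (by positivity) hx']
    calc _ ≤ ‖R ((M ^ 2 ^ (n + 1)) x)‖ * ‖R x‖ * ‖R x‖ := mul_le_mul_of_nonneg_right h hx'.le
      _ = _ := by ring
  · intro n
    rw [div_mul_eq_mul_div, div_le_div_iff_of_pos_right hx']
    calc ‖R ((M ^ 2 ^ n) x)‖ ≤ ‖R‖ * (‖M ^ 2 ^ n‖ * ‖x‖) :=
          (R.le_opNorm _).trans (mul_le_mul_of_nonneg_left ((M ^ 2 ^ n).le_opNorm x) (norm_nonneg R))
      _ ≤ ‖R‖ * (‖M‖ ^ 2 ^ n * ‖x‖) := by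
          gcongr; exact norm_pow_le' M (pow_pos two_pos n)
      _ = ‖R‖ * ‖x‖ * ‖M‖ ^ 2 ^ n := by ring

theorem exists_norm_map_apply_le_of_inner_eq {S T : E →L[𝕜] E}
    (h : ∀ u w, ⟪R u, R (S w)⟫_𝕜 = ⟪R (T u), R w⟫_𝕜) :
    ∃ C, ∀ x, ‖R (S x)‖ ≤ C * ‖R x‖ := by
  have hM : ∀ u w, ⟪R ((T ∘L S) u), R w⟫_𝕜 = ⟪R u, R ((T ∘L S) w)⟫_𝕜 := by
    intro u w
    rw [ContinuousLinearMap.comp_apply, ContinuousLinearMap.comp_apply, ← h,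
      ← inner_conj_symm (R u), ← h, inner_conj_symm]
  refine ⟨√‖T ∘L S‖, fun x => ?_⟩
  have hsq : ‖R (S x)‖ ^ 2 ≤ ‖T ∘L S‖ * ‖R x‖ ^ 2 :=
    calc ‖R (S x)‖ ^ 2 = RCLike.re ⟪R ((T ∘L S) x), R x⟫_𝕜 := by
          rw [ContinuousLinearMap.comp_apply, ← h, inner_self_eq_norm_sq]
      _ ≤ ‖R ((T ∘L S) x)‖ * ‖R x‖ :=
          (RCLike.re_le_norm _).trans (norm_inner_le_norm _ _)
      _ ≤ ‖T ∘L S‖ * ‖R x‖ ^ 2 := by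
          rw [sq, ← mul_assoc]
          exact mul_le_mul_of_nonneg_right (norm_map_apply_le_of_symm hM x) (norm_nonneg _)
  rw [← Real.sqrt_sq (norm_nonneg (R (S x))), ← Real.sqrt_sq (norm_nonneg (R x)),
    ← Real.sqrt_mul (norm_nonneg _)]
  exact Real.sqrt_le_sqrt hsq

end RelativeBound

section PositiveOperator

variable {H : Type*} [NormedAddCommGroup H] [InnerProductSpace ℂ H] {A : H →L[ℂ] H}

theorem ContinuousLinearMap.isPositive_of_inner_nonneg_s14 (hA : ∀ x, 0 ≤ ⟪x, A x⟫_ℂ) :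
    A.IsPositive := by
  have h : ∀ x, ⟪A x, x⟫_ℂ = ⟪x, A x⟫_ℂ := fun x => by
    rw [← inner_conj_symm]; exact (IsSelfAdjoint.of_nonneg (hA x)).star_eq
  rw [isPositive_iff]
  exact ⟨(LinearMap.isSymmetric_iff_inner_map_self_real _).mpr fun x => by simp [h],
    fun x => h x ▸ hA x⟩

theorem ContinuousLinearMap.IsPositive.exists_inner_apply_eq [CompleteSpace H]
    (hA : A.IsPositive) : ∃ R : H →L[ℂ] H, ∀ x y, ⟪x, A y⟫_ℂ = ⟪R x, R y⟫_ℂ := by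
  set R := CFC.sqrt A
  have hR : IsSelfAdjoint R := IsSelfAdjoint.of_nonneg (CFC.sqrt_nonneg A)
  refine ⟨R, fun x y => ?_⟩
  calc ⟪x, A y⟫_ℂ = ⟪x, adjoint R (R y)⟫_ℂ := by
        rw [hR.adjoint_eq, ← mul_apply_eq_comp, CFC.sqrt_mul_sqrt_self A
          ((nonneg_iff_isPositive A).mpr hA)]
    _ = ⟪R x, R y⟫_ℂ := adjoint_inner_right R x (R y)

theorem closure_range_eq_univ_of_inner_pos [CompleteSpace H]
    (hA : ∀ x, x ≠ 0 → 0 < ⟪x, A x⟫_ℂ) : closure (Set.range A) = Set.univ := by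
  have h : (LinearMap.range (A : H →ₗ[ℂ] H)).topologicalClosure = ⊤ := by
    rw [Submodule.topologicalClosure_eq_top_iff, Submodule.eq_bot_iff]
    intro x hx
    by_contra hx0
    have h0 : ⟪A x, x⟫_ℂ = 0 :=
      Submodule.inner_right_of_mem_orthogonal (LinearMap.mem_range_self _ x) hx
    exact (hA x hx0).ne' (by rw [← inner_conj_symm, h0, map_zero])
  simpa [LinearMap.coe_range] using congrArg SetLike.coe h

end PositiveOperator

open Complex

section OffDiagonal

variable {E F : Type*} [NormedAddCommGroup E] [NormedSpace ℂ E] [NormedAddCommGroup F]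
  [InnerProductSpace ℂ F] (R : E →L[ℂ] F) (X Y : E →L[ℂ] E)

noncomputable def phaseSum (θ : ℝ) : E →L[ℂ] E := exp (θ * I) • X + exp (-(θ * I)) • Y

def normRatios (S : E →L[ℂ] E) : Set ℝ := {r | ∃ x, x ≠ 0 ∧ r = ‖R (S x)‖ / ‖R x‖}

/-- The values `|⟨B T x, x⟩|`, `‖x‖_B = 1`, for `T = [[0, X], [Y^♯, 0]]` and `x = (a, b)`,
with `R = A ^ (1 / 2)`. -/
def offDiagValues : Set ℝ :=
  {r | ∃ a b, ‖R a‖ ^ 2 + ‖R b‖ ^ 2 = 1 ∧ r = ‖⟪R a, R (X b)⟫_ℂ + conj ⟪R a, R (Y b)⟫_ℂ‖}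

variable {R X Y}

theorem map_phaseSum_apply (θ : ℝ) (x : E) :
    R (phaseSum X Y θ x) = exp (θ * I) • R (X x) + exp (-(θ * I)) • R (Y x) := by
  simp [phaseSum]

theorem inner_map_phaseSum_apply (u : F) (θ : ℝ) (x : E) :
    ⟪u, R (phaseSum X Y θ x)⟫_ℂ
      = exp (θ * I) * ⟪u, R (X x)⟫_ℂ + exp (-(θ * I)) * ⟪u, R (Y x)⟫_ℂ := by
  rw [map_phaseSum_apply, inner_add_right, inner_smul_right, inner_smul_right]

theorem norm_map_phaseSum_apply_le (θ : ℝ) (x : E) :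
    ‖R (phaseSum X Y θ x)‖ ≤ ‖R (X x)‖ + ‖R (Y x)‖ := by
  rw [map_phaseSum_apply]
  refine (norm_add_le _ _).trans_eq ?_
  rw [norm_smul, norm_smul, norm_exp_ofReal_mul_I, norm_exp_neg_ofReal_mul_I, one_mul, one_mul]

theorem norm_map_apply_le_phaseSum (θ : ℝ) (x : E) :
    ‖R (X x)‖ ≤ ‖R (phaseSum X Y θ x)‖ + ‖R (Y x)‖ := by
  have h : exp (θ * I) • R (X x) = R (phaseSum X Y θ x) - exp (-(θ * I)) • R (Y x) := by
    rw [map_phaseSum_apply, add_sub_cancel_right]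
  have := norm_sub_le (R (phaseSum X Y θ x)) (exp (-(θ * I)) • R (Y x))
  rwa [← h, norm_smul, norm_smul, norm_exp_ofReal_mul_I, norm_exp_neg_ofReal_mul_I, one_mul,
    one_mul] at this

theorem nonneg_of_mem_normRatios {S : E →L[ℂ] E} {r : ℝ} (hr : r ∈ normRatios R S) : 0 ≤ r := by
  obtain ⟨x, -, rfl⟩ := hr
  positivity

theorem bddAbove_normRatios_iff (hR : Function.Injective R) (S : E →L[ℂ] E) :
    BddAbove (normRatios R S) ↔ ∃ C, ∀ x, ‖R (S x)‖ ≤ C * ‖R x‖ := by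
  constructor
  · rintro ⟨C, hC⟩
    refine ⟨C, fun x => ?_⟩
    rcases eq_or_ne x 0 with rfl | hx
    · simp
    · exact (div_le_iff₀ (norm_pos_iff.mpr ((map_ne_zero_iff R hR).mpr hx))).mp (hC ⟨x, hx, rfl⟩)
  · rintro ⟨C, hC⟩
    refine ⟨C, ?_⟩
    rintro _ ⟨x, hx, rfl⟩
    exact (div_le_iff₀ (norm_pos_iff.mpr ((map_ne_zero_iff R hR).mpr hx))).mpr (hC x)

theorem bddAbove_normRatios_phaseSum (hR : Function.Injective R)
    (hY : ∃ C, ∀ x, ‖R (Y x)‖ ≤ C * ‖R x‖) {θ : ℝ}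
    (hθ : BddAbove (normRatios R (phaseSum X Y θ))) (φ : ℝ) :
    BddAbove (normRatios R (phaseSum X Y φ)) := by
  obtain ⟨C, hC⟩ := (bddAbove_normRatios_iff hR _).mp hθ
  obtain ⟨D, hD⟩ := hY
  refine (bddAbove_normRatios_iff hR _).mpr ⟨C + 2 * D, fun x => ?_⟩
  linarith [norm_map_phaseSum_apply_le (R := R) (X := X) (Y := Y) φ x,
    norm_map_apply_le_phaseSum (R := R) (X := X) (Y := Y) θ x, hC x, hD x]

theorem exists_normRatios_ge_of_mem_offDiagValues (hR : Function.Injective R) {w : ℝ}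
    (hw : w ∈ offDiagValues R X Y) :
    ∃ θ : ℝ, ∃ u ∈ normRatios R (phaseSum X Y θ), w ≤ (1 / 2) * u := by
  obtain ⟨a, b, hab, rfl⟩ := hw
  obtain ⟨θ, hθ⟩ := exists_norm_exp_mul_add_exp_neg_mul ⟪R a, R (X b)⟫_ℂ ⟪R a, R (Y b)⟫_ℂ
  refine ⟨θ, ?_⟩
  rcases eq_or_ne b 0 with rfl | hb
  · have ha : a ≠ 0 := by rintro rfl; simp at hab
    exact ⟨_, ⟨a, ha, rfl⟩, by simp; positivity⟩
  refine ⟨_, ⟨b, hb, rfl⟩, ?_⟩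
  have hRb : 0 < ‖R b‖ := norm_pos_iff.mpr ((map_ne_zero_iff R hR).mpr hb)
  have hab' : ‖R a‖ * ‖R b‖ ≤ 1 / 2 := by nlinarith [sq_nonneg (‖R a‖ - ‖R b‖)]
  calc ‖⟪R a, R (X b)⟫_ℂ + conj ⟪R a, R (Y b)⟫_ℂ‖
      ≤ ‖⟪R a, R (X b)⟫_ℂ‖ + ‖⟪R a, R (Y b)⟫_ℂ‖ := by
        simpa only [RCLike.norm_conj] using norm_add_le _ (conj ⟪R a, R (Y b)⟫_ℂ)
    _ = ‖⟪R a, R (phaseSum X Y θ b)⟫_ℂ‖ := by rw [inner_map_phaseSum_apply, hθ]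
    _ ≤ ‖R a‖ * ‖R (phaseSum X Y θ b)‖ := norm_inner_le_norm _ _
    _ ≤ 1 / 2 * (‖R (phaseSum X Y θ b)‖ / ‖R b‖) := by
        rw [mul_div_assoc', le_div_iff₀ hRb, mul_right_comm]
        exact mul_le_mul_of_nonneg_right hab' (norm_nonneg _)

theorem norm_map_inv_norm_smul {v : E} (hv : R v ≠ 0) : ‖R (((‖R v‖⁻¹ : ℝ) : ℂ) • v)‖ = 1 := by
  rw [map_smul, norm_smul, norm_real, norm_inv, norm_norm, inv_mul_cancel₀ (norm_ne_zero_iff.mpr hv)]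

theorem mem_offDiagValues {a₀ b : E} (ha₀ : ‖R a₀‖ = 1) (hb : R b ≠ 0) :
    (‖⟪R a₀, R (X b)⟫_ℂ‖ + ‖⟪R a₀, R (Y b)⟫_ℂ‖) / (2 * ‖R b‖) ∈ offDiagValues R X Y := by
  have hRb : 0 < ‖R b‖ := norm_pos_iff.mpr hb
  set z := ⟪R a₀, R (X b)⟫_ℂ
  set v := ⟪R a₀, R (Y b)⟫_ℂ
  obtain ⟨ψ, hψ⟩ := exists_norm_exp_mul_add_exp_neg_mul z (conj v)
  set s : ℝ := (√2)⁻¹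
  have hs : s ^ 2 = 1 / 2 := by rw [inv_pow, Real.sq_sqrt zero_le_two, one_div]
  have hconj : conj (exp (-(ψ * I))) = exp (ψ * I) := by rw [← exp_conj]; simp
  have hconj' : conj (exp (ψ * I)) = exp (-(ψ * I)) := by rw [← exp_conj]; simp
  set a : E := ((s : ℂ) * exp (-(ψ * I))) • a₀
  set b' : E := ((s / ‖R b‖ : ℝ) : ℂ) • b
  have hval : ⟪R a, R (X b')⟫_ℂ + conj ⟪R a, R (Y b')⟫_ℂ
      = ((s * (s / ‖R b‖) : ℝ) : ℂ) * (exp (ψ * I) * z + exp (-(ψ * I)) * conj v) := by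
    simp only [a, b', map_smul, inner_smul_left, inner_smul_right, map_mul, conj_ofReal, hconj,
      hconj']
    push_cast
    ring
  refine ⟨a, b', ?_, ?_⟩
  · simp only [a, b', map_smul, norm_smul, norm_mul, norm_real, norm_exp_neg_ofReal_mul_I, ha₀]
    rw [Real.norm_of_nonneg (by positivity), Real.norm_of_nonneg (by positivity),
      div_mul_cancel₀ _ hRb.ne']
    linarith
  · have hss : s * (s / ‖R b‖) = 1 / (2 * ‖R b‖) := by
      rw [← mul_div_assoc, ← sq, hs, div_div]
    rw [hval, norm_mul, hψ, RCLike.norm_conj, norm_real, hss,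
      Real.norm_of_nonneg (by positivity), one_div_mul_eq_div]

theorem exists_offDiagValues_ge_of_mem_normRatios (hR : Function.Injective R) {θ u : ℝ}
    (hu : u ∈ normRatios R (phaseSum X Y θ)) :
    ∃ w ∈ offDiagValues R X Y, (1 / 2) * u ≤ w := by
  obtain ⟨b, hb, rfl⟩ := hu
  set y := phaseSum X Y θ b
  have hRb : R b ≠ 0 := (map_ne_zero_iff R hR).mpr hb
  rcases eq_or_ne (R y) 0 with hy | hy
  · refine ⟨_, ⟨0, ((‖R b‖⁻¹ : ℝ) : ℂ) • b, ?_, rfl⟩, by simp [hy]⟩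
    rw [map_zero, norm_zero, norm_map_inv_norm_smul hRb]
    norm_num
  set a₀ : E := ((‖R y‖⁻¹ : ℝ) : ℂ) • y
  have h : ⟪R a₀, R y⟫_ℂ = ‖R y‖ := by
    rw [map_smul, inner_smul_left, inner_self_eq_norm_sq_to_K]
    simp [sq, hy]
  refine ⟨_, mem_offDiagValues (norm_map_inv_norm_smul hy) hRb, ?_⟩
  calc 1 / 2 * (‖R y‖ / ‖R b‖) = ‖⟪R a₀, R y⟫_ℂ‖ / (2 * ‖R b‖) := by
        rw [h, norm_real, norm_norm]; ring
    _ ≤ _ := by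
        gcongr
        rw [inner_map_phaseSum_apply]
        refine (norm_add_le _ _).trans_eq ?_
        rw [norm_mul, norm_mul, norm_exp_ofReal_mul_I, norm_exp_neg_ofReal_mul_I, one_mul, one_mul]

theorem sSup_offDiagValues (hR : Function.Injective R) :
    sSup (offDiagValues R X Y) = 1 / 2 * sSup (⋃ θ : ℝ, normRatios R (phaseSum X Y θ)) := by
  rw [← smul_eq_mul, ← Real.sSup_smul_of_nonneg (by norm_num)]
  refine csSup_eq_csSup_of_forall_exists_le (fun w hw => ?_) ?_
  · obtain ⟨θ, u, hu, hwu⟩ := exists_normRatios_ge_of_mem_offDiagValues hR hw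
    exact ⟨_, Set.smul_mem_smul_set (Set.mem_iUnion_of_mem θ hu), hwu⟩
  · rintro _ ⟨u, hu, rfl⟩
    obtain ⟨θ, hu⟩ := Set.mem_iUnion.mp hu
    exact exists_offDiagValues_ge_of_mem_normRatios hR hu

end OffDiagonal

section OperatorSeminorm

variable {H : Type*} [NormedAddCommGroup H] [InnerProductSpace ℂ H] {A R : H →L[ℂ] H}

theorem sqrt_re_inner_apply_self (hAR : ∀ x y, ⟪x, A y⟫_ℂ = ⟪R x, R y⟫_ℂ) (x : H) :
    √(⟪x, A x⟫_ℂ).re = ‖R x‖ := by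
  rw [hAR, ← RCLike.re_to_complex, inner_self_eq_norm_sq, Real.sqrt_sq (norm_nonneg _)]

theorem normA_eq_sSup_normRatios (hAR : ∀ x y, ⟪x, A y⟫_ℂ = ⟪R x, R y⟫_ℂ)
    (hA : closure (Set.range A) = Set.univ) (S : H →L[ℂ] H) :
    normA A S = sSup (normRatios R S) := by
  simp only [normA, hA, Set.mem_univ, true_and, sqrt_re_inner_apply_self hAR]
  rfl

theorem wA_eq_sSup_offDiagValues (hAR : ∀ x y, ⟪x, A y⟫_ℂ = ⟪R x, R y⟫_ℂ)
    {T12 T21 T21s : H →L[ℂ] H} (hadj : ∀ u w, ⟪R u, R (T21s w)⟫_ℂ = ⟪R (T21 u), R w⟫_ℂ)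
    {B T : (PiLp 2 fun _ : Fin 2 => H) →L[ℂ] (PiLp 2 fun _ : Fin 2 => H)}
    (hB : ∀ x i, B x i = A (x i)) (hT : ∀ x, T x 0 = T12 (x 1) ∧ T x 1 = T21 (x 0)) :
    wA B T = sSup (offDiagValues R T12 T21s) := by
  have hBinner : ∀ x y : PiLp 2 (fun _ : Fin 2 => H),
      ⟪x, B y⟫_ℂ = ⟪R (x 0), R (y 0)⟫_ℂ + ⟪R (x 1), R (y 1)⟫_ℂ := fun x y => by
    rw [PiLp.inner_apply, Fin.sum_univ_two, hB, hB, hAR, hAR]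
  have hform : ∀ x, ⟪x, B (T x)⟫_ℂ
      = ⟪R (x 0), R (T12 (x 1))⟫_ℂ + conj ⟪R (x 0), R (T21s (x 1))⟫_ℂ := fun x => by
    rw [hBinner, (hT x).1, (hT x).2, hadj, inner_conj_symm]
  have hnorm : ∀ x, ⟪x, B x⟫_ℂ = ((‖R (x 0)‖ ^ 2 + ‖R (x 1)‖ ^ 2 : ℝ) : ℂ) := fun x => by
    rw [hBinner, inner_self_eq_norm_sq_to_K, inner_self_eq_norm_sq_to_K]
    push_cast
    rfl
  unfold wA
  congr 1
  ext r
  simp only [hform, hnorm, ofReal_eq_one]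
  constructor
  · rintro ⟨x, hx, rfl⟩
    exact ⟨x 0, x 1, hx, rfl⟩
  · rintro ⟨a, b, hab, rfl⟩
    exact ⟨WithLp.toLp 2 ![a, b], hab, rfl⟩

end OperatorSeminorm

/-- For `A > 0`, `B = diag(A,A)` and `T = [[0,T₁₂],[T₂₁,0]]` on `H ⊕ H`:
`w_B(T) = (1/2) sup_{θ∈ℝ} ‖e^{iθ}T₁₂ + e^{−iθ}T₂₁^♯‖_A`. -/
theorem wB_eq_sup_normA {H : Type*} [NormedAddCommGroup H] [InnerProductSpace ℂ H]
    [CompleteSpace H] (A T12 T21 T21s : H →L[ℂ] H)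
    (hA : ∀ x : H, x ≠ 0 → 0 < (inner ℂ x (A x) : ℂ))
    (hT21s : A.comp T21s = (ContinuousLinearMap.adjoint T21).comp A)
    (B T : (PiLp 2 fun _ : Fin 2 => H) →L[ℂ] (PiLp 2 fun _ : Fin 2 => H))
    (hB : ∀ x i, B x i = A (x i))
    (hT : ∀ x, T x 0 = T12 (x 1) ∧ T x 1 = T21 (x 0)) :
    wA B T = (1/2) * ⨆ θ : ℝ,
      normA A (Complex.exp (θ * Complex.I) • T12 + Complex.exp (-(θ * Complex.I)) • T21s) := by
  have hpos : A.IsPositive := ContinuousLinearMap.isPositive_of_inner_nonneg_s14 fun x => by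
    rcases eq_or_ne x 0 with rfl | hx
    · simp
    · exact (hA x hx).le
  obtain ⟨R, hAR⟩ := hpos.exists_inner_apply_eq
  have hR : Function.Injective R := (injective_iff_map_eq_zero R).mpr fun x hx => by
    by_contra hx0
    simpa [hAR, hx] using hA x hx0
  have hadj : ∀ u w, ⟪R u, R (T21s w)⟫_ℂ = ⟪R (T21 u), R w⟫_ℂ := fun u w => by
    rw [← hAR, ← hAR, ← ContinuousLinearMap.comp_apply A T21s, hT21s,
      ContinuousLinearMap.comp_apply, ContinuousLinearMap.adjoint_inner_right]
  have hN : ∀ θ : ℝ, normA A (exp (θ * I) • T12 + exp (-(θ * I)) • T21s)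
      = sSup (normRatios R (phaseSum T12 T21s θ)) := fun θ =>
    normA_eq_sSup_normRatios hAR (closure_range_eq_univ_of_inner_pos hA) _
  rw [wA_eq_sSup_offDiagValues hAR hadj hB hT, sSup_offDiagValues hR]
  simp only [hN]
  rw [Real.iSup_sSup_eq_sSup_iUnion (fun θ _ => nonneg_of_mem_normRatios)
    fun θ _ h => bddAbove_normRatios_phaseSum hR (exists_norm_map_apply_le_of_inner_eq hadj) h _]
end

section
/- Let A ≥ 0 on H, B = diag(A,...,A) on ⊕ⁿH, and T = (T_{ij}) an n×n operator matrix with each T_{ij} admitting an A-adjoint. Then ‖T‖_B ≤ ‖(‖T_{ij}‖_A)‖, i.e., the B-operator seminorm of T is at most the operator norm of the n×n nonnegative matrix with entries ‖T_{ij}‖_A. -/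
/-! Factor `A = R† R` (for instance `R = A ^ (1/2)`), so that `‖x‖_A = ‖R x‖`.
If `A S = M† A`, then `P = S M` satisfies `A P = P† A` and
`‖R M x‖² = Re ⟪R x, R P x⟫ ≤ ‖R x‖ ‖R P x‖`. For such a `P`, Cauchy–Schwarz gives
`‖R P x‖² ≤ ‖R P² x‖ ‖R x‖`; iterating along the powers `P ^ 2 ^ k` and comparing with the
trivial growth `‖R P ^ m x‖ ≤ ‖R‖ ‖x‖ ‖P‖ ^ m` yields `‖R P x‖ ≤ ‖P‖ ‖R x‖`. So every entry `M i j`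
is `A`-bounded, `‖R M i j y‖ ≤ ‖M i j‖_A ‖R y‖`, and by the triangle inequality the vector
`(‖R (T x) i‖)_i`, whose Euclidean norm is `‖T x‖_B`, is dominated entrywise by the matrix
`(‖M i j‖_A)` applied to `(‖R x j‖)_j`, whose Euclidean norm is `‖x‖_B`. -/

open scoped ComplexOrder

open ContinuousLinearMap RCLike
open scoped InnerProductSpace

lemma le_of_forall_pow_two_pow_le_mul_pow {a b K : ℝ} (hb : 0 ≤ b)
    (h : ∀ k : ℕ, a ^ 2 ^ k ≤ K * b ^ 2 ^ k) : a ≤ b := by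
  by_contra! hba
  rcases hb.eq_or_lt with rfl | hb
  · simpa [hba.not_ge] using h 0
  have ht : 1 < a / b := (one_lt_div hb).mpr hba
  obtain ⟨k, hk⟩ := pow_unbounded_of_one_lt K ht
  have : (a / b) ^ 2 ^ k ≤ K := by
    rw [div_pow, div_le_iff₀ (by positivity)]
    exact h k
  exact (hk.trans_le ((pow_le_pow_right₀ ht.le k.lt_two_pow_self.le).trans this)).false

lemma le_mul_of_sq_le_mul_of_le_mul_pow {f : ℕ → ℝ} {C q : ℝ} (hf : ∀ m, 0 ≤ f m) (hq : 0 ≤ q)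
    (hsq : ∀ m, f m ^ 2 ≤ f (2 * m) * f 0) (hC : ∀ m, f m ≤ C * q ^ m) :
    f 1 ≤ q * f 0 := by
  rcases (hf 0).eq_or_lt with h0 | h0
  · have : f 1 ^ 2 ≤ 0 := by simpa [← h0] using hsq 1
    rw [← h0, mul_zero]
    nlinarith
  have iter (k : ℕ) : f 1 ^ 2 ^ k * f 0 ≤ f (2 ^ k) * f 0 ^ 2 ^ k := by
    induction k with
    | zero => simp
    | succ k ih =>
      have hsq' : f (2 ^ k) ^ 2 ≤ f (2 ^ (k + 1)) * f 0 := by rw [pow_succ' 2 k]; exact hsq _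
      refine le_of_mul_le_mul_right ?_ h0
      calc f 1 ^ 2 ^ (k + 1) * f 0 * f 0 = (f 1 ^ 2 ^ k * f 0) ^ 2 := by ring
        _ ≤ (f (2 ^ k) * f 0 ^ 2 ^ k) ^ 2 := by
          have := hf 1
          exact pow_le_pow_left₀ (by positivity) ih 2
        _ = f (2 ^ k) ^ 2 * f 0 ^ 2 ^ (k + 1) := by ring
        _ ≤ f (2 ^ (k + 1)) * f 0 * f 0 ^ 2 ^ (k + 1) := by gcongr
        _ = f (2 ^ (k + 1)) * f 0 ^ 2 ^ (k + 1) * f 0 := by ring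
  refine le_of_forall_pow_two_pow_le_mul_pow (by positivity) (K := C / f 0) fun k => ?_
  rw [div_mul_eq_mul_div, le_div_iff₀ h0, mul_pow]
  calc f 1 ^ 2 ^ k * f 0 ≤ f (2 ^ k) * f 0 ^ 2 ^ k := iter k
    _ ≤ C * q ^ 2 ^ k * f 0 ^ 2 ^ k := by gcongr; exact hC _
    _ = _ := by ring

section Factorization

variable {𝕜 H K : Type*} [RCLike 𝕜] [NormedAddCommGroup H] [InnerProductSpace 𝕜 H]
  [CompleteSpace H] [NormedAddCommGroup K] [InnerProductSpace 𝕜 K] [CompleteSpace K]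
  {A : H →L[𝕜] H} {R : H →L[𝕜] K}

lemma inner_apply_eq_inner_of_eq_adjoint_comp (hR : A = adjoint R ∘L R) (x y : H) :
    ⟪x, A y⟫_𝕜 = ⟪R x, R y⟫_𝕜 := by
  rw [hR, comp_apply, adjoint_inner_right]

lemma re_inner_apply_self_of_eq_adjoint_comp (hR : A = adjoint R ∘L R) (x : H) :
    re ⟪x, A x⟫_𝕜 = ‖R x‖ ^ 2 := by
  rw [inner_apply_eq_inner_of_eq_adjoint_comp hR, inner_self_eq_norm_sq]

lemma norm_apply_sq_le_of_mul_eq_star_mul (hR : A = adjoint R ∘L R) {P : H →L[𝕜] H}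
    (hP : A * P = star P * A) (x : H) :
    ‖R (P x)‖ ^ 2 ≤ ‖R (P (P x))‖ * ‖R x‖ := by
  have hAP : A (P x) = adjoint P (A x) := congr($hP x)
  calc ‖R (P x)‖ ^ 2 = re ⟪P x, A (P x)⟫_𝕜 := (re_inner_apply_self_of_eq_adjoint_comp hR _).symm
    _ = re ⟪R (P (P x)), R x⟫_𝕜 := by
      rw [hAP, adjoint_inner_right, inner_apply_eq_inner_of_eq_adjoint_comp hR]
    _ ≤ ‖R (P (P x))‖ * ‖R x‖ := re_inner_le_norm _ _

lemma norm_apply_le_opNorm_mul_of_mul_eq_star_mul (hR : A = adjoint R ∘L R)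
    {P : H →L[𝕜] H} (hP : A * P = star P * A) (x : H) :
    ‖R (P x)‖ ≤ ‖P‖ * ‖R x‖ := by
  have hPow (m : ℕ) : A * P ^ m = star (P ^ m) * A := by
    rw [star_pow]; exact SemiconjBy.pow_right hP m
  refine le_mul_of_sq_le_mul_of_le_mul_pow (f := fun m => ‖R ((P ^ m) x)‖) (C := ‖R‖ * ‖x‖)
    (fun _ => norm_nonneg _) (norm_nonneg _) (fun m => ?_) (fun m => ?_)
  · simpa only [pow_mul', sq, pow_zero, mul_apply_eq_comp, one_apply_eq_self] using
      norm_apply_sq_le_of_mul_eq_star_mul hR (hPow m) x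
  · calc ‖R ((P ^ m) x)‖ ≤ ‖R‖ * (‖P ^ m‖ * ‖x‖) := R.le_opNorm_of_le ((P ^ m).le_opNorm x)
      _ ≤ ‖R‖ * (‖P‖ ^ m * ‖x‖) := by
        gcongr
        rcases m with _ | m
        · exact (pow_zero P).symm ▸ norm_id_le
        · exact norm_pow_le' P m.succ_pos
      _ = ‖R‖ * ‖x‖ * ‖P‖ ^ m := by ring

lemma norm_apply_sq_le_of_comp_eq_adjoint_comp (hR : A = adjoint R ∘L R) {M S : H →L[𝕜] H}
    (hS : A ∘L S = adjoint M ∘L A) (x : H) :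
    ‖R (M x)‖ ^ 2 ≤ ‖S * M‖ * ‖R x‖ ^ 2 := by
  have hA : IsSelfAdjoint A := hR ▸ (isPositive_adjoint_comp_self R).isSelfAdjoint
  have hS' : A * S = star M * A := hS
  have hSA : star S * A = A * M := by
    simpa only [star_mul, hA.star_eq, star_star] using congr(star $hS')
  have hP : A * (S * M) = star (S * M) * A := by
    rw [← mul_assoc, hS', mul_assoc, ← hSA, star_mul, mul_assoc]
  calc ‖R (M x)‖ ^ 2 = re ⟪M x, A (M x)⟫_𝕜 := (re_inner_apply_self_of_eq_adjoint_comp hR _).symm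
    _ = re ⟪R x, R ((S * M) x)⟫_𝕜 := by
      rw [← adjoint_inner_right, ← comp_apply, ← hS, ← inner_apply_eq_inner_of_eq_adjoint_comp hR]
      rfl
    _ ≤ ‖R x‖ * ‖R ((S * M) x)‖ := re_inner_le_norm _ _
    _ ≤ ‖R x‖ * (‖S * M‖ * ‖R x‖) := by
      gcongr; exact norm_apply_le_opNorm_mul_of_mul_eq_star_mul hR hP x
    _ = ‖S * M‖ * ‖R x‖ ^ 2 := by ring

end Factorization

section ASeminorm

variable {H K : Type*} [NormedAddCommGroup H] [InnerProductSpace ℂ H]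
  [NormedAddCommGroup K] [InnerProductSpace ℂ K]

lemma normA_nonneg (A M : H →L[ℂ] H) : 0 ≤ normA A M :=
  Real.sSup_nonneg (by rintro r ⟨x, -, -, rfl⟩; positivity)

lemma nonneg_of_forall_inner_nonneg_right {A : H →L[ℂ] H} (hA : ∀ x : H, 0 ≤ ⟪x, A x⟫_ℂ) :
    0 ≤ A := by
  rw [nonneg_iff_isPositive, isPositive_iff_complex]
  intro x
  have hx : ⟪x, A x⟫_ℂ = (⟪x, A x⟫_ℂ).re := Complex.eq_re_of_ofReal_le (hA x)
  rw [← inner_conj_symm, hx, Complex.conj_ofReal, re_to_complex, Complex.ofReal_re]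
  exact ⟨rfl, Complex.zero_le_real.mp (hx ▸ hA x)⟩

variable [CompleteSpace H] [CompleteSpace K] {A : H →L[ℂ] H} {R : H →L[ℂ] K}

lemma sqrt_re_inner_apply_self_of_eq_adjoint_comp (hR : A = adjoint R ∘L R) (x : H) :
    √(⟪x, A x⟫_ℂ).re = ‖R x‖ := by
  rw [← re_to_complex, re_inner_apply_self_of_eq_adjoint_comp hR, Real.sqrt_sq (norm_nonneg _)]

lemma normA_eq_sSup_of_eq_adjoint_comp (hR : A = adjoint R ∘L R) (M : H →L[ℂ] H) :
    normA A M = sSup {r | ∃ x ∈ closure (Set.range A), x ≠ 0 ∧ r = ‖R (M x)‖ / ‖R x‖} := by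
  simp only [normA, sqrt_re_inner_apply_self_of_eq_adjoint_comp hR]

/-- `hc` is what makes the set defining `normA A M` bounded above; for an unbounded set `sSup`
would be the junk value `0`. -/
lemma norm_apply_le_normA_mul (hR : A = adjoint R ∘L R) {M : H →L[ℂ] H} {c : ℝ} (hc₀ : 0 ≤ c)
    (hc : ∀ x, ‖R (M x)‖ ≤ c * ‖R x‖) {x : H} (hx : x ∈ closure (Set.range A)) :
    ‖R (M x)‖ ≤ normA A M * ‖R x‖ := by
  rcases (norm_nonneg (R x)).eq_or_lt with hRx | hRx
  · simpa [← hRx] using hc x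
  have hx₀ : x ≠ 0 := by rintro rfl; simp at hRx
  have hbdd : BddAbove {r | ∃ x ∈ closure (Set.range A), x ≠ 0 ∧ r = ‖R (M x)‖ / ‖R x‖} :=
    ⟨c, by rintro _ ⟨y, -, -, rfl⟩; exact div_le_of_le_mul₀ (norm_nonneg _) hc₀ (hc y)⟩
  rw [normA_eq_sSup_of_eq_adjoint_comp hR, ← div_le_iff₀ hRx]
  exact le_csSup hbdd ⟨x, hx, hx₀, rfl⟩

lemma norm_apply_le_normA_mul_of_comp_eq_adjoint_comp (hR : A = adjoint R ∘L R)
    {M S : H →L[ℂ] H} (hS : A ∘L S = adjoint M ∘L A) {x : H} (hx : x ∈ closure (Set.range A)) :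
    ‖R (M x)‖ ≤ normA A M * ‖R x‖ := by
  refine norm_apply_le_normA_mul hR (Real.sqrt_nonneg ‖S * M‖) (fun y => ?_) hx
  rw [← Real.sqrt_sq (norm_nonneg (R y)), ← Real.sqrt_mul (norm_nonneg _)]
  exact Real.le_sqrt_of_sq_le (norm_apply_sq_le_of_comp_eq_adjoint_comp hR hS y)

end ASeminorm

section BlockDiagonal

variable {ι H K : Type*} [NormedAddCommGroup H] [InnerProductSpace ℂ H]
  [NormedAddCommGroup K] [InnerProductSpace ℂ K]

lemma apply_mem_closure_range_of_mem_closure_range {A : H →L[ℂ] H}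
    {B : (PiLp 2 fun _ : ι => H) →L[ℂ] (PiLp 2 fun _ : ι => H)} (hB : ∀ x i, B x i = A (x i))
    {x : PiLp 2 fun _ : ι => H} (hx : x ∈ closure (Set.range B)) (i : ι) :
    x i ∈ closure (Set.range A) :=
  map_mem_closure (f := fun y : PiLp 2 (fun _ : ι => H) => y i)
    (PiLp.proj (𝕜 := ℂ) 2 (fun _ : ι => H) i).continuous hx
    (by rintro _ ⟨y, rfl⟩; exact ⟨y i, (hB y i).symm⟩)

variable [Fintype ι]

lemma norm_le_norm_of_forall_norm_apply_le {𝕜 : Type*} [RCLike 𝕜] {u v : EuclideanSpace 𝕜 ι}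
    (h : ∀ i, ‖u i‖ ≤ ‖v i‖) : ‖u‖ ≤ ‖v‖ := by
  rw [EuclideanSpace.norm_eq, EuclideanSpace.norm_eq]
  gcongr with i
  exact h i

lemma norm_toEuclideanCLM_ofReal_apply [DecidableEq ι] {c : ι → ι → ℝ} (hc : ∀ i j, 0 ≤ c i j)
    {w : ι → ℝ} (hw : ∀ j, 0 ≤ w j) (i : ι) :
    ‖Matrix.toEuclideanCLM (𝕜 := ℂ) (Matrix.of fun i j => (c i j : ℂ))
      (WithLp.toLp 2 fun j => (w j : ℂ)) i‖ = ∑ j, c i j * w j := by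
  rw [Matrix.toEuclideanCLM_toLp, PiLp.toLp_apply]
  simp only [Matrix.mulVec, dotProduct, Matrix.of_apply]
  push_cast [← Complex.ofReal_mul, ← Complex.ofReal_sum]
  rw [Complex.norm_real]
  exact Real.norm_of_nonneg (Finset.sum_nonneg fun j _ => mul_nonneg (hc i j) (hw j))

def componentNorms (R : H →L[ℂ] K) (x : PiLp 2 fun _ : ι => H) : EuclideanSpace ℂ ι :=
  WithLp.toLp 2 fun i => (‖R (x i)‖ : ℂ)

variable [CompleteSpace H] [CompleteSpace K] {A : H →L[ℂ] H} {R : H →L[ℂ] K}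
  {B : (PiLp 2 fun _ : ι => H) →L[ℂ] (PiLp 2 fun _ : ι => H)}

lemma sqrt_re_inner_apply_self_eq_norm_componentNorms (hR : A = adjoint R ∘L R)
    (hB : ∀ x i, B x i = A (x i)) (x : PiLp 2 fun _ : ι => H) :
    √(⟪x, B x⟫_ℂ).re = ‖componentNorms R x‖ := by
  rw [EuclideanSpace.norm_eq, PiLp.inner_apply, Complex.re_sum]
  congr 1
  refine Finset.sum_congr rfl fun i _ => ?_
  rw [hB, ← re_to_complex, re_inner_apply_self_of_eq_adjoint_comp hR]
  simp [componentNorms]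

end BlockDiagonal

/-- For `A ≥ 0`, `B = diag(A,…,A)` and `T = (M i j)` an `n × n` operator matrix whose
entries admit A-adjoints, the B-operator seminorm of `T` is at most the operator norm of
the `n × n` matrix `(‖M i j‖_A)`. -/
theorem normB_opMatrix_le (n : ℕ) {H : Type*} [NormedAddCommGroup H]
    [InnerProductSpace ℂ H] [CompleteSpace H] (A : H →L[ℂ] H)
    (hA : ∀ x : H, 0 ≤ (inner ℂ x (A x) : ℂ))
    (M : Fin n → Fin n → (H →L[ℂ] H))
    (hadj : ∀ i j, ∃ S : H →L[ℂ] H,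
      A.comp S = (ContinuousLinearMap.adjoint (M i j)).comp A)
    (B T : (PiLp 2 fun _ : Fin n => H) →L[ℂ] (PiLp 2 fun _ : Fin n => H))
    (hB : ∀ x i, B x i = A (x i))
    (hT : ∀ x, ∀ i, T x i = ∑ j, M i j (x j)) :
    normA B T ≤ ‖Matrix.toEuclideanCLM (𝕜 := ℂ)
      (Matrix.of fun i j => ((normA A (M i j) : ℝ) : ℂ))‖ := by
  obtain ⟨R, hR⟩ := CStarAlgebra.nonneg_iff_eq_star_mul_self.mp
    (nonneg_of_forall_inner_nonneg_right hA)
  replace hR : A = adjoint R ∘L R := hR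
  refine Real.sSup_le ?_ (norm_nonneg _)
  rintro _ ⟨x, hx, -, rfl⟩
  have hrow (i : Fin n) : ‖R (T x i)‖ ≤ ∑ j, normA A (M i j) * ‖R (x j)‖ := by
    rw [hT, map_sum]
    refine (norm_sum_le _ _).trans (Finset.sum_le_sum fun j _ => ?_)
    obtain ⟨S, hS⟩ := hadj i j
    exact norm_apply_le_normA_mul_of_comp_eq_adjoint_comp hR hS
      (apply_mem_closure_range_of_mem_closure_range hB hx j)
  rw [sqrt_re_inner_apply_self_eq_norm_componentNorms hR hB,
    sqrt_re_inner_apply_self_eq_norm_componentNorms hR hB]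
  refine div_le_of_le_mul₀ (norm_nonneg _) (norm_nonneg _)
    ((norm_le_norm_of_forall_norm_apply_le fun i => ?_).trans (le_opNorm _ _))
  unfold componentNorms
  rw [norm_toEuclideanCLM_ofReal_apply (fun i j => normA_nonneg _ _) (fun j => norm_nonneg _),
    PiLp.toLp_apply, Complex.norm_real, norm_norm]
  exact hrow i
end
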